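/- arXiv:1201.1546 — 5 statements merged into one kernel-verified Lean document; each statement's English description precedes it below -/
import Mathlib

section
/- Let 𝒯 be a mesh in ℝ^d satisfying: (a) the union of the simplices of 𝒯 is a neighborhood of the origin; (b) the vertices of each T ∈ 𝒯 lie in ℤ^d and T has volume 1/d!; and each simplex of 𝒯 has the origin as a vertex. Define γ(𝒯) := min uᵀv/(‖u‖·‖v‖), the minimum being taken over all pairs (u,v) of nonzero vertices of a common simplex T ∈ 𝒯, and assume −1 < γ(𝒯) < 1; set κ(𝒯) := √((1+γ(𝒯))/(1−γ(𝒯))). Then for every M ∈ S_d^+ with κ(M) ≤ κ(𝒯), the mesh 𝒯 is M-reduced (i.e. in addition, for each T ∈ 𝒯 the nonzero vertices v_1,…,v_d of T satisfy v_iᵀ M v_j ≥ 0 for all 1 ≤ i ≤ j ≤ d). -/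
/-!
For nonzero vertices `v, w` of a common simplex put `a = ‖v‖`, `b = ‖w‖`, `p = b v + a w` and
`m = b v - a w`. Then `4 a b · vᵀ M w = ‖p‖_M² - ‖m‖_M²`, while
`‖m‖² / ‖p‖² = (a b - vᵀ w) / (a b + vᵀ w) ≤ (1 - γ) / (1 + γ) ≤ κ(M)⁻²` because the cosine of
the angle between `v` and `w` is at least `γ`. Since `‖m‖_M ‖p‖ ≤ κ(M) ‖p‖_M ‖m‖` by definition
of `κ(M)`, this gives `‖m‖_M ≤ ‖p‖_M`, that is `vᵀ M w ≥ 0`.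
-/

open Matrix
open scoped BigOperators ENNReal Classical

noncomputable section

/-- Euclidean norm of a vector of `ℝ^d`. -/
def euclNorm {d : ℕ} (u : Fin d → ℝ) : ℝ := Real.sqrt (u ⬝ᵥ u)

/-- The norm `‖u‖_M := √(uᵀ M u)` associated to a matrix `M`. -/
def normM {d : ℕ} (M : Matrix (Fin d) (Fin d) ℝ) (u : Fin d → ℝ) : ℝ :=
  Real.sqrt (u ⬝ᵥ M.mulVec u)

/-- Operator norm of a matrix, with respect to the euclidean norm. -/
def opNorm {d : ℕ} (M : Matrix (Fin d) (Fin d) ℝ) : ℝ :=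
  sSup {r : ℝ | ∃ u : Fin d → ℝ, euclNorm u = 1 ∧ r = euclNorm (M.mulVec u)}

/-- Anisotropy ratio `κ(M) := max ‖u‖_M/‖v‖_M` over euclidean-unit vectors `u, v`. -/
def kappa {d : ℕ} (M : Matrix (Fin d) (Fin d) ℝ) : ℝ :=
  sSup {r : ℝ | ∃ u v : Fin d → ℝ,
    euclNorm u = 1 ∧ euclNorm v = 1 ∧ r = normM M u / normM M v}

/-- `z` has integer coordinates, i.e. `z ∈ ℤ^d`. -/
def IsIntVec {d : ℕ} (z : Fin d → ℝ) : Prop := ∀ i, ∃ m : ℤ, z i = (m : ℝ)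

/-- `z` belongs to the sub-lattice `u_0 ℤ + ⋯ + u_{k-1} ℤ` generated by the
first `k` vectors of the family `u`. -/
def InLatticeSpan {d : ℕ} (u : Fin d → Fin d → ℝ) (k : ℕ) (z : Fin d → ℝ) : Prop :=
  ∃ c : Fin d → ℤ, (∀ i : Fin d, ¬ ((i : ℕ) < k) → c i = 0) ∧ z = ∑ i, (c i : ℝ) • u i

/-- `u` is an `M`-reduced basis of `ℤ^d`: a basis of the lattice `ℤ^d`
(integer entries, determinant `±1`) such that each `u k` minimizes `‖·‖_M`
among integer vectors outside the sub-lattice spanned by `u 0, …, u (k-1)`. -/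
def IsReducedBasis {d : ℕ} (M : Matrix (Fin d) (Fin d) ℝ) (u : Fin d → Fin d → ℝ) : Prop :=
  (∀ i, IsIntVec (u i)) ∧ |(Matrix.of u).det| = 1 ∧
  ∀ k : Fin d, ∀ z : Fin d → ℝ, IsIntVec z → ¬ InLatticeSpan u (k : ℕ) z →
    normM M (u k) ≤ normM M z

/-- A simplex of `ℝ^d`, described by its vertex set: `d+1` affinely independent points. -/
def IsSimplex (d : ℕ) (V : Finset (Fin d → ℝ)) : Prop :=
  V.card = d + 1 ∧ AffineIndependent ℝ (fun v : V => (v : Fin d → ℝ))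

/-- A (conforming) mesh: a finite collection of simplices such that the intersection
of any two of them is the convex hull of their common vertices. -/
def IsMesh (d : ℕ) (𝒯 : Finset (Finset (Fin d → ℝ))) : Prop :=
  (∀ V ∈ 𝒯, IsSimplex d V) ∧
  ∀ S ∈ 𝒯, ∀ T ∈ 𝒯,
    (convexHull ℝ (S : Set (Fin d → ℝ))) ∩ (convexHull ℝ (T : Set (Fin d → ℝ)))
      = convexHull ℝ ((S ∩ T : Finset (Fin d → ℝ)) : Set (Fin d → ℝ))

/-- An `M`-reduced mesh. -/
def IsReducedMesh {d : ℕ} (M : Matrix (Fin d) (Fin d) ℝ)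
    (𝒯 : Finset (Finset (Fin d → ℝ))) : Prop :=
  IsMesh d 𝒯 ∧
  (⋃ V ∈ 𝒯, convexHull ℝ (V : Set (Fin d → ℝ))) ∈ nhds (0 : Fin d → ℝ) ∧
  (∀ V ∈ 𝒯, ∀ v ∈ V, IsIntVec v) ∧
  (∀ V ∈ 𝒯, MeasureTheory.volume (convexHull ℝ (V : Set (Fin d → ℝ)))
      = ENNReal.ofReal (1 / (Nat.factorial d))) ∧
  (∀ V ∈ 𝒯, (0 : Fin d → ℝ) ∈ V) ∧
  (∀ V ∈ 𝒯, ∀ v ∈ V, ∀ w ∈ V, v ≠ 0 → w ≠ 0 → 0 ≤ v ⬝ᵥ M.mulVec w)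

/-- `z` is a vertex of the mesh `𝒯`. -/
def IsMeshVertex {d : ℕ} (𝒯 : Finset (Finset (Fin d → ℝ))) (z : Fin d → ℝ) : Prop :=
  ∃ V ∈ 𝒯, z ∈ V

/-- The multiplicative distance `d_×(M,N) := sup_{u ≠ 0} |ln ‖u‖_M − ln ‖u‖_N|`. -/
def dTimes {d : ℕ} (M N : Matrix (Fin d) (Fin d) ℝ) : ℝ :=
  sSup {r : ℝ | ∃ u : Fin d → ℝ, u ≠ 0 ∧ r = |Real.log (normM M u) - Real.log (normM N u)|}

/-- The periodic unit box `Ω = (ℝ/ℤ)^d`. -/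
abbrev Torus (d : ℕ) : Type := Fin d → AddCircle (1 : ℝ)

/-- Canonical projection `ℝ^d → (ℝ/ℤ)^d`. -/
def toTorus {d : ℕ} (x : Fin d → ℝ) : Torus d := fun i => (x i : AddCircle (1 : ℝ))

/-- The grid `Ω_n = {0, 1/n, …, (n-1)/n}^d ⊂ Ω`. -/
def IsGridPoint {d : ℕ} (n : ℕ) (z : Torus d) : Prop :=
  ∃ k : Fin d → ℤ, ∀ i, z i = (((k i : ℝ) / (n : ℝ) : ℝ) : AddCircle (1 : ℝ))

/-- The quotient (periodic) distance on the torus. -/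
def dPer {d : ℕ} (z x : Torus d) : ℝ :=
  sInf {r : ℝ | ∃ Z X : Fin d → ℝ, toTorus Z = z ∧ toTorus X = x ∧ r = euclNorm (Z - X)}

/-- The Hopf–Lax update operator associated to the matrix `M`, the stencil (mesh) `𝒯`,
and the grid scale `1/n`: minimum over simplices `T ∈ 𝒯`, and over barycentric
coefficients `α ≥ 0` supported on the nonzero vertices of `T` with total mass 1, of
`‖∑ α_v v/n‖_M + ∑ α_v u(z + v/n)` (with the convention `0·∞ = 0`). -/
def hopfLax {d : ℕ} (M : Matrix (Fin d) (Fin d) ℝ) (𝒯 : Finset (Finset (Fin d → ℝ)))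
    (n : ℕ) (u : Torus d → ℝ≥0∞) (z : Torus d) : ℝ≥0∞ :=
  ⨅ (T : Finset (Fin d → ℝ)) (_ : T ∈ 𝒯) (α : (Fin d → ℝ) → ℝ)
    (_ : ∀ w, 0 ≤ α w) (_ : α 0 = 0) (_ : ∑ w ∈ T, α w = 1),
    ENNReal.ofReal (normM M ((n : ℝ)⁻¹ • ∑ w ∈ T, α w • w)) +
      ∑ w ∈ T, ENNReal.ofReal (α w) * u (z + toTorus ((n : ℝ)⁻¹ • w))

/-- `u` solves the discrete fixed point system: `u(0) = 0` and
`u(z) = Λ_n(u,z)` at every other grid point `z`. -/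
def SolvesDiscrete {d : ℕ} (𝓜 : Torus d → Matrix (Fin d) (Fin d) ℝ)
    (𝒯 : Torus d → Finset (Finset (Fin d → ℝ))) (n : ℕ) (u : Torus d → ℝ≥0∞) : Prop :=
  u 0 = 0 ∧ ∀ z : Torus d, IsGridPoint n z → z ≠ 0 → u z = hopfLax (𝓜 z) (𝒯 z) n u z

section

variable {d : ℕ}

lemma euclNorm_eq_norm (u : Fin d → ℝ) :
    euclNorm u = ‖(WithLp.toLp 2 u : EuclideanSpace ℝ (Fin d))‖ := by
  simp [euclNorm, EuclideanSpace.norm_eq, dotProduct, sq]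

lemma euclNorm_sq (u : Fin d → ℝ) : euclNorm u ^ 2 = u ⬝ᵥ u :=
  Real.sq_sqrt (dotProduct_self_star_nonneg u)

lemma euclNorm_pos {u : Fin d → ℝ} (hu : u ≠ 0) : 0 < euclNorm u := by
  rw [euclNorm_eq_norm]
  simpa using hu

lemma euclNorm_smul (t : ℝ) (u : Fin d → ℝ) : euclNorm (t • u) = |t| * euclNorm u := by
  simp [euclNorm_eq_norm, norm_smul]

lemma isCompact_euclNorm_eq_one : IsCompact {u : Fin d → ℝ | euclNorm u = 1} := by
  have h : {u : Fin d → ℝ | euclNorm u = 1} =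
      WithLp.ofLp '' Metric.sphere (0 : EuclideanSpace ℝ (Fin d)) 1 := by
    ext u
    simp only [Set.mem_ofPred_eq, euclNorm_eq_norm, Set.mem_image, mem_sphere_iff_norm, sub_zero]
    exact ⟨fun h => ⟨_, h, rfl⟩, by rintro ⟨x, hx, rfl⟩; exact hx⟩
  rw [h]
  exact (isCompact_sphere _ _).image (PiLp.continuous_ofLp 2 _)

lemma continuous_normM (M : Matrix (Fin d) (Fin d) ℝ) : Continuous (normM M) := by
  unfold normM
  fun_prop

lemma normM_smul (M : Matrix (Fin d) (Fin d) ℝ) (t : ℝ) (u : Fin d → ℝ) :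
    normM M (t • u) = |t| * normM M u := by
  rw [normM, normM, mulVec_smul, smul_dotProduct, dotProduct_smul, smul_eq_mul, smul_eq_mul,
    ← mul_assoc, ← sq, Real.sqrt_mul (sq_nonneg t), Real.sqrt_sq_eq_abs]

lemma normM_sq {M : Matrix (Fin d) (Fin d) ℝ} (hM : M.PosSemidef) (u : Fin d → ℝ) :
    normM M u ^ 2 = u ⬝ᵥ M *ᵥ u :=
  Real.sq_sqrt (by simpa using hM.dotProduct_mulVec_nonneg u)

lemma normM_pos {M : Matrix (Fin d) (Fin d) ℝ} (hM : M.PosDef) {u : Fin d → ℝ} (hu : u ≠ 0) :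
    0 < normM M u :=
  Real.sqrt_pos.mpr (by simpa using hM.dotProduct_mulVec_pos hu)

lemma normM_div_normM_le_kappa {M : Matrix (Fin d) (Fin d) ℝ} (hM : M.PosDef)
    {u v : Fin d → ℝ} (hu : euclNorm u = 1) (hv : euclNorm v = 1) :
    normM M u / normM M v ≤ kappa M := by
  obtain ⟨u₀, hu₀, hmin⟩ :=
    isCompact_euclNorm_eq_one.exists_isMinOn ⟨u, hu⟩ (continuous_normM M).continuousOn
  obtain ⟨u₁, -, hmax⟩ :=
    isCompact_euclNorm_eq_one.exists_isMaxOn ⟨u, hu⟩ (continuous_normM M).continuousOn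
  have hpos : 0 < normM M u₀ := normM_pos hM (by rintro rfl; simp [euclNorm] at hu₀)
  refine le_csSup ⟨normM M u₁ / normM M u₀, ?_⟩ ⟨u, v, hu, hv, rfl⟩
  rintro _ ⟨x, y, hx, hy, rfl⟩
  exact div_le_div₀ (Real.sqrt_nonneg _) (hmax hx) hpos (hmin hy)

lemma kappa_nonneg (M : Matrix (Fin d) (Fin d) ℝ) : 0 ≤ kappa M :=
  Real.sSup_nonneg <| by
    rintro _ ⟨u, v, -, -, rfl⟩
    exact div_nonneg (Real.sqrt_nonneg _) (Real.sqrt_nonneg _)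

lemma normM_mul_euclNorm_le {M : Matrix (Fin d) (Fin d) ℝ} (hM : M.PosDef) (x y : Fin d → ℝ) :
    normM M x * euclNorm y ≤ kappa M * normM M y * euclNorm x := by
  rcases eq_or_ne x 0 with rfl | hx
  · simp [normM, euclNorm]
  rcases eq_or_ne y 0 with rfl | hy
  · simp [normM, euclNorm]
  have hx' := euclNorm_pos hx
  have hy' := euclNorm_pos hy
  have h := normM_div_normM_le_kappa hM (u := (euclNorm x)⁻¹ • x) (v := (euclNorm y)⁻¹ • y)
    (by rw [euclNorm_smul, abs_inv, abs_of_pos hx', inv_mul_cancel₀ hx'.ne'])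
    (by rw [euclNorm_smul, abs_inv, abs_of_pos hy', inv_mul_cancel₀ hy'.ne'])
  rw [normM_smul, normM_smul, abs_inv, abs_inv, abs_of_pos hx', abs_of_pos hy',
    div_le_iff₀ (by have := normM_pos hM hy; positivity)] at h
  field_simp at h
  linarith

lemma kappa_sq_mul_le {M : Matrix (Fin d) (Fin d) ℝ} {γ : ℝ} (hγgt : -1 < γ) (hγlt : γ < 1)
    (hκ : kappa M ≤ √((1 + γ) / (1 - γ))) : kappa M ^ 2 * (1 - γ) ≤ 1 + γ := by
  have h := pow_le_pow_left₀ (kappa_nonneg M) hκ 2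
  rw [Real.sq_sqrt (div_nonneg (by linarith) (by linarith))] at h
  rwa [le_div_iff₀ (by linarith)] at h

lemma dotProduct_mulVec_nonneg_of_le_cos {M : Matrix (Fin d) (Fin d) ℝ}
    (hM : M.PosDef) {γ : ℝ} (hγ : -1 < γ) (hκ : kappa M ^ 2 * (1 - γ) ≤ 1 + γ)
    {v w : Fin d → ℝ} (hv : v ≠ 0) (hw : w ≠ 0)
    (hvw : γ * (euclNorm v * euclNorm w) ≤ v ⬝ᵥ w) : 0 ≤ v ⬝ᵥ M *ᵥ w := by
  set a := euclNorm v
  set b := euclNorm w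
  have hab : 0 < a * b := mul_pos (euclNorm_pos hv) (euclNorm_pos hw)
  set p := b • v + a • w
  set m := b • v - a • w
  have hsymm : w ⬝ᵥ M *ᵥ v = v ⬝ᵥ M *ᵥ w := by
    rw [← dotProduct_transpose_mulVec, (isHermitian_iff_isSymm.mp hM.isHermitian).eq]
  have hpol : p ⬝ᵥ M *ᵥ p - m ⬝ᵥ M *ᵥ m = 4 * (a * b) * (v ⬝ᵥ M *ᵥ w) := by
    simp only [p, m, mulVec_add, mulVec_sub, mulVec_smul, add_dotProduct, sub_dotProduct,
      dotProduct_add, dotProduct_sub, smul_dotProduct, dotProduct_smul, smul_eq_mul, hsymm]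
    ring
  have hvv : v ⬝ᵥ v = a ^ 2 := (euclNorm_sq v).symm
  have hww : w ⬝ᵥ w = b ^ 2 := (euclNorm_sq w).symm
  have hwv : w ⬝ᵥ v = v ⬝ᵥ w := dotProduct_comm w v
  have hpp : p ⬝ᵥ p = 2 * (a * b) * (a * b + v ⬝ᵥ w) := by
    simp only [p, add_dotProduct, dotProduct_add, smul_dotProduct, dotProduct_smul, smul_eq_mul,
      hvv, hww, hwv]
    ring
  have hmm : m ⬝ᵥ m = 2 * (a * b) * (a * b - v ⬝ᵥ w) := by
    simp only [m, sub_dotProduct, dotProduct_sub, smul_dotProduct, dotProduct_smul, smul_eq_mul,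
      hvv, hww, hwv]
    ring
  have hbound : (m ⬝ᵥ M *ᵥ m) * (p ⬝ᵥ p) ≤ kappa M ^ 2 * (p ⬝ᵥ M *ᵥ p) * (m ⬝ᵥ m) := by
    have h : (normM M m * euclNorm p) ^ 2 ≤ (kappa M * normM M p * euclNorm m) ^ 2 :=
      pow_le_pow_left₀ (mul_nonneg (Real.sqrt_nonneg _) (Real.sqrt_nonneg _))
        (normM_mul_euclNorm_le hM m p) 2
    rwa [mul_pow, mul_pow, mul_pow, normM_sq hM.posSemidef, normM_sq hM.posSemidef,
      euclNorm_sq, euclNorm_sq] at h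
  have hκmp : kappa M ^ 2 * (m ⬝ᵥ m) ≤ p ⬝ᵥ p := by
    rw [hpp, hmm]
    have : kappa M ^ 2 * (a * b - v ⬝ᵥ w) ≤ a * b + v ⬝ᵥ w := by nlinarith [sq_nonneg (kappa M)]
    nlinarith
  have hp_pos : 0 < p ⬝ᵥ p := by
    have : 0 < a * b + v ⬝ᵥ w := by nlinarith
    rw [hpp]
    positivity
  have hMp : 0 ≤ p ⬝ᵥ M *ᵥ p := by simpa using hM.posSemidef.dotProduct_mulVec_nonneg p
  have hMmp : m ⬝ᵥ M *ᵥ m ≤ p ⬝ᵥ M *ᵥ p := by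
    refine le_of_mul_le_mul_right ?_ hp_pos
    linarith [mul_le_mul_of_nonneg_left hκmp hMp]
  nlinarith

end

/-- Proposition `propGammaT`: a mesh satisfying (a), (b) and having the origin as a vertex
of each simplex is `M`-reduced for every symmetric positive definite `M` with
`κ(M) ≤ κ(𝒯) = √((1+γ(𝒯))/(1−γ(𝒯)))`. -/
theorem stmt0 {d : ℕ} (𝒯 : Finset (Finset (Fin d → ℝ)))
    (hmesh : IsMesh d 𝒯)
    (hnbhd : (⋃ V ∈ 𝒯, convexHull ℝ (V : Set (Fin d → ℝ))) ∈ nhds (0 : Fin d → ℝ))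
    (hint : ∀ V ∈ 𝒯, ∀ v ∈ V, IsIntVec v)
    (hvol : ∀ V ∈ 𝒯, MeasureTheory.volume (convexHull ℝ (V : Set (Fin d → ℝ)))
      = ENNReal.ofReal (1 / (Nat.factorial d)))
    (hzero : ∀ V ∈ 𝒯, (0 : Fin d → ℝ) ∈ V)
    (γ : ℝ)
    (hγ : IsLeast {r : ℝ | ∃ V ∈ 𝒯, ∃ u ∈ V, ∃ v ∈ V, u ≠ 0 ∧ v ≠ 0 ∧
      r = (u ⬝ᵥ v) / (euclNorm u * euclNorm v)} γ)
    (hγgt : -1 < γ) (hγlt : γ < 1)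
    (M : Matrix (Fin d) (Fin d) ℝ) (hM : M.PosDef)
    (hκ : kappa M ≤ Real.sqrt ((1 + γ) / (1 - γ))) :
    IsReducedMesh M 𝒯 := by
  refine ⟨hmesh, hnbhd, hint, hvol, hzero, fun V hV v hv w hw hv0 hw0 => ?_⟩
  have hcos : γ ≤ (v ⬝ᵥ w) / (euclNorm v * euclNorm w) :=
    hγ.2 ⟨V, hV, v, hv, w, hw, hv0, hw0, rfl⟩
  rw [le_div_iff₀ (mul_pos (euclNorm_pos hv0) (euclNorm_pos hw0))] at hcos
  exact dotProduct_mulVec_nonneg_of_le_cos hM hγgt (kappa_sq_mul_le hγgt hγlt hκ) hv0 hw0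
    hcos

end
end

section
/- Let 1 ≤ d ≤ 4 and let M ∈ S_d^+. Then there exists an M-reduced basis of ℤ^d; that is, a d-tuple (u_1,…,u_d) of vectors of ℤ^d with |det(u_1,…,u_d)| = 1 such that for each 1 ≤ k ≤ d, the vector u_k minimizes ‖z‖_M among all z ∈ ℤ^d \ (u_1ℤ + ⋯ + u_{k−1}ℤ) (for k = 1, among all z ∈ ℤ^d \ {0}). -/
open Matrix
open scoped BigOperators ENNReal Classical

noncomputable section

/-!
Greedy construction. Let `b₀, …, b_{k-1}` (`k ≤ 3`) be lattice vectors whose integer span `S`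
is all of `L ∩ F`, `F` their real span, and let `v₀ ∈ L \ S` have least norm `m`, so that
`‖bᵢ‖ ≤ m`. Babai rounding modulo `S` moves any `z ∈ F + ℝv₀` whose `v₀`-coefficient is `t`
to a vector of squared norm at most `t²m² + k m²/4 ≤ t²m² + 3m²/4`. Hence the coefficients of
the lattice points of `F + ℝv₀` form a group `qℤ` with `0 < q ≤ 1`: a least positive value
exists by discreteness. If `q = 1`, `v₀` extends the basis; otherwise `q ≤ 1/2`, and rounding a
lattice point of coefficient `q` gives `v ∉ S` with `‖v‖² ≤ m²/4 + 3m²/4`, so `‖v‖ = m` and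
again `S + ℤv = L ∩ (F + ℝv)`. After `d ≤ 4` steps, `b` is a basis of `L` realising the
successive minima; for `L = ℤ^d` its matrix is an integer matrix with an integer inverse.
-/

open Submodule Module RealInnerProductSpace

theorem exists_linearMap_eq_zero_eq_one_of_notMem {K V : Type*} [Field K] [AddCommGroup V]
    [Module K V] {p : Submodule K V} {x : V} (hx : x ∉ p) :
    ∃ g : V →ₗ[K] K, (∀ y ∈ p, g y = 0) ∧ g x = 1 := by
  obtain ⟨f, hf⟩ := Projective.exists_dual_eq_one K (x := p.mkQ x)
    (by rwa [mkQ_apply, Ne, Quotient.mk_eq_zero])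
  exact ⟨f ∘ₗ p.mkQ, fun y hy => by simp [(Quotient.mk_eq_zero p).2 hy], hf⟩

theorem sub_smul_mem_span_of_mem_span_insert {R M : Type*} [CommRing R] [AddCommGroup M]
    [Module R M] {s : Set M} {v z : M} (g : M →ₗ[R] R) (hgs : ∀ y ∈ span R s, g y = 0)
    (hgv : g v = 1) (hz : z ∈ span R (insert v s)) : z - g z • v ∈ span R s := by
  obtain ⟨a, y, hy, rfl⟩ := mem_span_insert.1 hz
  simpa [hgs y hy, hgv] using hy

theorem mem_span_singleton_sup_of_forall_lt {M : Type*} [AddCommGroup M] [Module ℝ M]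
    (g : M →ₗ[ℝ] ℝ) {S T : Submodule ℤ M} {u : M} (hu : u ∈ T) (hgu : 0 < g u)
    (hgap : ∀ z ∈ T, 0 ≤ g z → g z < g u → z ∈ S) {z : M} (hz : z ∈ T) :
    z ∈ span ℤ {u} ⊔ S := by
  set n := ⌊g z / g u⌋
  have hgz : g (z - n • u) = g z - n * g u := by
    rw [map_sub, ← Int.cast_smul_eq_zsmul ℝ, map_smul, smul_eq_mul]
  have hrem : z - n • u ∈ S := by
    refine hgap _ (T.sub_mem hz (T.smul_mem n hu)) ?_ ?_ <;> rw [hgz]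
    · have := Int.floor_le (g z / g u)
      rw [le_div_iff₀ hgu] at this
      linarith
    · have := Int.lt_floor_add_one (g z / g u)
      rw [div_lt_iff₀ hgu] at this
      linarith
  rw [← sub_add_cancel z (n • u), add_comm]
  exact add_mem_sup (zsmul_mem (mem_span_singleton_self u) n) hrem

section Rounding

variable {E : Type*} [NormedAddCommGroup E] [InnerProductSpace ℝ E]

theorem exists_mem_span_int_norm_sub_sq_le (s : Finset E) {r : ℝ} (hs : ∀ c ∈ s, ‖c‖ ≤ r)
    {x : E} (hx : x ∈ span ℝ (s : Set E)) :
    ∃ l ∈ span ℤ (s : Set E), ‖x - l‖ ^ 2 ≤ s.card * r ^ 2 / 4 := by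
  induction s using Finset.induction_on generalizing x with
  | empty => simp_all
  | insert c s hcs ih =>
    rw [Finset.coe_insert, mem_span_insert] at hx
    obtain ⟨t, y, hy, rfl⟩ := hx
    set F := span ℝ (s : Set E)
    set j := round t
    have hyF : (t - j) • F.starProjection c + y ∈ F :=
      F.add_mem (F.smul_mem _ (starProjection_apply_mem _ _)) hy
    obtain ⟨l, hl, hxl⟩ := ih (fun c hc => hs c (Finset.mem_insert_of_mem hc)) hyF
    refine ⟨j • c + l, ?_, ?_⟩
    · rw [Finset.coe_insert]
      exact add_mem (zsmul_mem (subset_span (Set.mem_insert _ _)) _)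
        (span_mono (Set.subset_insert _ _) hl)
    have hdecomp : t • c + y - (j • c + l) =
        (t - j) • Fᗮ.starProjection c + ((t - j) • F.starProjection c + y - l) := by
      rw [starProjection_orthogonal_val, ← Int.cast_smul_eq_zsmul ℝ]; module
    have horth : ⟪(t - j) • Fᗮ.starProjection c, (t - j) • F.starProjection c + y - l⟫ = 0 :=
      inner_left_of_mem_orthogonal (F.sub_mem hyF (span_le_restrictScalars ℤ ℝ _ hl))
        (Fᗮ.smul_mem _ (starProjection_apply_mem _ _))
    have hround : ‖(t - j) • Fᗮ.starProjection c‖ ^ 2 ≤ r ^ 2 / 4 := by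
      have h₁ : |t - j| ≤ 1 / 2 := abs_sub_round t
      have h₂ : ‖Fᗮ.starProjection c‖ ≤ r :=
        (norm_starProjection_apply_le _ c).trans (hs c (Finset.mem_insert_self c s))
      rw [norm_smul, Real.norm_eq_abs, mul_pow]
      have := pow_le_pow_left₀ (abs_nonneg _) h₁ 2
      have := pow_le_pow_left₀ (norm_nonneg _) h₂ 2
      nlinarith
    rw [hdecomp, norm_add_sq_real, horth, Finset.card_insert_of_notMem hcs]
    push_cast
    linarith

theorem exists_mem_span_int_norm_smul_add_sub_sq_le (s : Finset E) {r : ℝ}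
    (hs : ∀ c ∈ s, ‖c‖ ≤ r) (t : ℝ) (v : E) {y : E} (hy : y ∈ span ℝ (s : Set E)) :
    ∃ l ∈ span ℤ (s : Set E), ‖t • v + y - l‖ ^ 2 ≤ t ^ 2 * ‖v‖ ^ 2 + s.card * r ^ 2 / 4 := by
  set F := span ℝ (s : Set E)
  obtain ⟨l, hl, hbound⟩ :=
    exists_mem_span_int_norm_sub_sq_le s hs (starProjection_apply_mem F (t • v + y))
  refine ⟨l, hl, ?_⟩
  have hdecomp : t • v + y - l = t • Fᗮ.starProjection v + (F.starProjection (t • v + y) - l) := by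
    simp only [starProjection_orthogonal_val, map_add, map_smul, F.starProjection_eq_self_iff.2 hy]
    module
  have horth : ⟪t • Fᗮ.starProjection v, F.starProjection (t • v + y) - l⟫ = 0 :=
    inner_left_of_mem_orthogonal (F.sub_mem (starProjection_apply_mem _ _)
      (span_le_restrictScalars ℤ ℝ _ hl)) (Fᗮ.smul_mem _ (starProjection_apply_mem _ _))
  have hv : ‖t • Fᗮ.starProjection v‖ ^ 2 ≤ t ^ 2 * ‖v‖ ^ 2 := by
    rw [norm_smul, mul_pow, Real.norm_eq_abs, sq_abs]
    gcongr
    exact Fᗮ.norm_starProjection_apply_le v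
  rw [hdecomp, norm_add_sq_real, horth]
  linarith

theorem exists_mem_inf_apply_eq_norm_sq_le {L : Submodule ℤ E} {s : Finset E}
    (hsL : (s : Set E) ⊆ L) (hcard : s.card ≤ 3) {v : E} (hs : ∀ c ∈ s, ‖c‖ ≤ ‖v‖)
    (g : E →ₗ[ℝ] ℝ) (hgs : ∀ y ∈ span ℝ (s : Set E), g y = 0) (hgv : g v = 1) {z : E}
    (hz : z ∈ L ⊓ (span ℝ (insert v (s : Set E))).restrictScalars ℤ) :
    ∃ z' ∈ L ⊓ (span ℝ (insert v (s : Set E))).restrictScalars ℤ,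
      g z' = g z ∧ ‖z'‖ ^ 2 ≤ (g z ^ 2 + 3 / 4) * ‖v‖ ^ 2 := by
  obtain ⟨hzL, hzV⟩ := hz
  obtain ⟨l, hl, hzl⟩ := exists_mem_span_int_norm_smul_add_sub_sq_le s hs (g z) v
    (sub_smul_mem_span_of_mem_span_insert g hgs hgv hzV)
  have hlF : l ∈ span ℝ (s : Set E) := span_le_restrictScalars ℤ ℝ _ hl
  refine ⟨z - l, ⟨L.sub_mem hzL (span_le.2 hsL hl), ?_⟩, ?_, ?_⟩
  · exact sub_mem hzV (span_mono (Set.subset_insert _ _) hlF)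
  · rw [map_sub, hgs l hlF, sub_zero]
  · have : (s.card : ℝ) ≤ 3 := by exact_mod_cast hcard
    rw [add_sub_cancel] at hzl
    nlinarith [sq_nonneg ‖v‖]

end Rounding

section Lattice

variable {E : Type*} [NormedAddCommGroup E] [InnerProductSpace ℝ E] [FiniteDimensional ℝ E]
  {L : Submodule ℤ E} [DiscreteTopology L]

theorem finite_inter_closedBall (R : ℝ) : ((L : Set E) ∩ Metric.closedBall 0 R).Finite := by
  rw [Set.inter_comm]
  exact Metric.finite_isBounded_inter_isClosed DiscreteTopology.isDiscrete
    Metric.isBounded_closedBall (AddSubgroup.isClosed_of_discrete (H := L.toAddSubgroup))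

theorem exists_forall_norm_le_of_subset {P : Set E} (hPL : P ⊆ L) (hP : P.Nonempty) :
    ∃ v ∈ P, ∀ z ∈ P, ‖v‖ ≤ ‖z‖ := by
  obtain ⟨z₀, hz₀⟩ := hP
  have hfin : (P ∩ Metric.closedBall 0 ‖z₀‖).Finite :=
    (finite_inter_closedBall (L := L) ‖z₀‖).subset (Set.inter_subset_inter_left _ hPL)
  obtain ⟨v, ⟨hvP, -⟩, hvmin⟩ :=
    Set.exists_min_image _ (‖·‖) hfin ⟨z₀, hz₀, by simp⟩
  refine ⟨v, hvP, fun z hz => ?_⟩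
  by_cases h : ‖z‖ ≤ ‖z₀‖
  · exact hvmin z ⟨hz, by simpa using h⟩
  · exact (hvmin z₀ ⟨hz₀, by simp⟩).trans (not_le.1 h).le

theorem exists_pos_apply_forall_lt_mem_span {s : Finset E} (hsL : (s : Set E) ⊆ L)
    (hcard : s.card ≤ 3) (hprim : ∀ z ∈ L, z ∈ span ℝ (s : Set E) → z ∈ span ℤ (s : Set E))
    {v : E} (hvL : v ∈ L) (hs : ∀ c ∈ s, ‖c‖ ≤ ‖v‖) (g : E →ₗ[ℝ] ℝ)
    (hgs : ∀ y ∈ span ℝ (s : Set E), g y = 0) (hgv : g v = 1) :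
    ∃ w ∈ L ⊓ (span ℝ (insert v (s : Set E))).restrictScalars ℤ, 0 < g w ∧
      ∀ z ∈ L ⊓ (span ℝ (insert v (s : Set E))).restrictScalars ℤ,
        0 ≤ g z → g z < g w → z ∈ span ℤ (s : Set E) := by
  set T := L ⊓ (span ℝ (insert v (s : Set E))).restrictScalars ℤ
  have hvT : v ∈ T := ⟨hvL, subset_span (Set.mem_insert v _)⟩
  -- Rounding modulo `span ℤ s` keeps `g` and makes a lattice point short, so the least positive
  -- value of `g` on the finitely many short points is its least positive value on all of `T`.
  set C := {z | z ∈ T ∧ ‖z‖ ≤ 2 * ‖v‖ ∧ 0 < g z}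
  have hC : C.Finite := (finite_inter_closedBall (L := L) (2 * ‖v‖)).subset
    fun z hz => ⟨hz.1.1, mem_closedBall_zero_iff.2 hz.2.1⟩
  have hvC : v ∈ C := ⟨hvT, by linarith [norm_nonneg v], by rw [hgv]; exact one_pos⟩
  obtain ⟨w, hwC, hwmin⟩ := Set.exists_min_image C g hC ⟨v, hvC⟩
  refine ⟨w, hwC.1, hwC.2.2, fun z hz hz0 hzw => ?_⟩
  obtain ⟨z', hz'T, hgz', hz'⟩ := exists_mem_inf_apply_eq_norm_sq_le hsL hcard hs g hgs hgv hz
  rcases hz0.eq_or_lt with hz0 | hz0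
  · refine hprim z hz.1 ?_
    simpa [← hz0] using sub_smul_mem_span_of_mem_span_insert g hgs hgv hz.2
  · have hw1 : g w ≤ 1 := hgv ▸ hwmin v hvC
    have hz'C : z' ∈ C := by
      refine ⟨hz'T, (pow_le_pow_iff_left₀ (norm_nonneg _) (by positivity) two_ne_zero).1 ?_,
        hgz' ▸ hz0⟩
      have : g z ^ 2 ≤ 1 := by nlinarith
      nlinarith [sq_nonneg ‖v‖]
    linarith [hwmin z' hz'C]

theorem exists_norm_eq_forall_mem_span_insert {s : Finset E} (hsL : (s : Set E) ⊆ L)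
    (hcard : s.card ≤ 3) (hprim : ∀ z ∈ L, z ∈ span ℝ (s : Set E) → z ∈ span ℤ (s : Set E))
    {v₀ : E} (hv₀L : v₀ ∈ L) (hv₀s : v₀ ∉ span ℤ (s : Set E))
    (hmin : ∀ z ∈ L, z ∉ span ℤ (s : Set E) → ‖v₀‖ ≤ ‖z‖) (hs : ∀ c ∈ s, ‖c‖ ≤ ‖v₀‖) :
    ∃ v ∈ L, v ∉ span ℝ (s : Set E) ∧ ‖v‖ = ‖v₀‖ ∧
      ∀ z ∈ L, z ∈ span ℝ (insert v (s : Set E)) → z ∈ span ℤ (insert v (s : Set E)) := by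
  obtain ⟨g, hgs, hgv⟩ :=
    exists_linearMap_eq_zero_eq_one_of_notMem fun h => hv₀s (hprim v₀ hv₀L h)
  obtain ⟨w, hwT, hw0, hgap⟩ :=
    exists_pos_apply_forall_lt_mem_span hsL hcard hprim hv₀L hs g hgs hgv
  set T := L ⊓ (span ℝ (insert v₀ (s : Set E))).restrictScalars ℤ
  have hv₀T : v₀ ∈ T := ⟨hv₀L, subset_span (Set.mem_insert v₀ _)⟩
  suffices ∃ u ∈ T, g u = g w ∧ ‖u‖ = ‖v₀‖ by
    obtain ⟨u, huT, hgu, hu⟩ := this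
    refine ⟨u, huT.1, fun h => hw0.ne' (hgu ▸ hgs u h), hu, fun z hzL hz => ?_⟩
    have hV : span ℝ (insert u (s : Set E)) ≤ span ℝ (insert v₀ (s : Set E)) :=
      span_le.2 (Set.insert_subset huT.2 (subset_span.trans (span_mono (Set.subset_insert _ _))))
    rw [span_insert]
    exact mem_span_singleton_sup_of_forall_lt g huT (hgu ▸ hw0) (hgu ▸ hgap) ⟨hzL, hV hz⟩
  have hw1 : g w ≤ 1 := not_lt.1 fun h => hv₀s (hgap v₀ hv₀T (hgv ▸ zero_le_one) (hgv ▸ h))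
  rcases hw1.eq_or_lt with hw1 | hw1
  · exact ⟨v₀, hv₀T, hgv.trans hw1.symm, rfl⟩
  obtain ⟨v, hvT, hgvw, hv⟩ := exists_mem_inf_apply_eq_norm_sq_le hsL hcard hs g hgs hgv hwT
  have hw2 : g w ≤ 1 / 2 := by
    obtain ⟨a, ha, y, hy, hv₀⟩ :=
      mem_sup.1 (mem_span_singleton_sup_of_forall_lt g hwT hw0 hgap hv₀T)
    obtain ⟨n, rfl⟩ := mem_span_singleton.1 ha
    have hn : (n : ℝ) * g w = 1 := by
      rw [← hgv, ← hv₀, map_add, hgs y (span_le_restrictScalars ℤ ℝ _ hy), add_zero,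
        ← Int.cast_smul_eq_zsmul ℝ, map_smul, smul_eq_mul]
    have : (1 : ℝ) < n := by nlinarith
    have : (2 : ℝ) ≤ n := by exact_mod_cast (show (1 : ℤ) < n by exact_mod_cast this)
    nlinarith
  have hvs : v ∉ span ℤ (s : Set E) := fun h =>
    hw0.ne' (hgvw ▸ hgs v (span_le_restrictScalars ℤ ℝ _ h))
  refine ⟨v, hvT, hgvw, le_antisymm ?_ (hmin v hvT.1 hvs)⟩
  refine (pow_le_pow_iff_left₀ (norm_nonneg _) (norm_nonneg _) two_ne_zero).1 ?_
  have : g w ^ 2 ≤ 1 / 4 := by nlinarith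
  nlinarith [sq_nonneg ‖v₀‖]

end Lattice

section Prefix

variable {E : Type*} {d : ℕ}

def prefixImage (b : Fin d → E) (k : ℕ) : Finset E :=
  (Finset.univ.filter fun i : Fin d => (i : ℕ) < k).image b

theorem mem_prefixImage {b : Fin d → E} {k : ℕ} {x : E} :
    x ∈ prefixImage b k ↔ ∃ i : Fin d, (i : ℕ) < k ∧ b i = x := by
  simp [prefixImage]

theorem card_prefixImage_le (b : Fin d → E) (k : ℕ) : (prefixImage b k).card ≤ k := by
  refine Finset.card_image_le.trans ?_
  calc (Finset.univ.filter fun i : Fin d => (i : ℕ) < k).card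
      ≤ (Finset.range k).card :=
        Finset.card_le_card_of_injOn (↑) (fun i hi => by simpa using hi) Fin.val_injective.injOn
    _ = k := Finset.card_range k

theorem prefixImage_mono (b : Fin d → E) {j k : ℕ} (h : j ≤ k) :
    prefixImage b j ⊆ prefixImage b k :=
  Finset.image_subset_image (Finset.monotone_filter_right _ fun _ _ hi => hi.trans_le h)

theorem prefixImage_update_of_le (b : Fin d → E) {k : ℕ} (hk : k < d) (v : E) {j : ℕ}
    (hj : j ≤ k) : prefixImage (Function.update b ⟨k, hk⟩ v) j = prefixImage b j := by
  refine Finset.image_congr fun i hi => Function.update_of_ne ?_ _ _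
  rintro rfl
  simp at hi
  omega

theorem prefixImage_update_succ (b : Fin d → E) {k : ℕ} (hk : k < d) (v : E) :
    prefixImage (Function.update b ⟨k, hk⟩ v) (k + 1) = insert v (prefixImage b k) := by
  ext x
  simp only [mem_prefixImage, Finset.mem_insert]
  constructor
  · rintro ⟨i, hi, rfl⟩
    rcases (Nat.lt_succ_iff.1 hi).lt_or_eq with hi | hi
    · exact Or.inr ⟨i, hi, (Function.update_of_ne (Fin.ne_of_val_ne hi.ne) _ _).symm⟩
    · left
      obtain rfl : i = ⟨k, hk⟩ := Fin.ext hi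
      exact Function.update_self _ _ _
  · rintro (rfl | ⟨i, hi, rfl⟩)
    · exact ⟨⟨k, hk⟩, k.lt_succ_self, Function.update_self _ _ _⟩
    · exact ⟨i, hi.trans k.lt_succ_self, Function.update_of_ne (Fin.ne_of_val_ne hi.ne) _ _⟩

theorem prefixImage_eq_image_univ (b : Fin d → E) : prefixImage b d = Finset.univ.image b := by
  simp [prefixImage]

end Prefix

section GreedyBasis

variable {E : Type*} [NormedAddCommGroup E] [InnerProductSpace ℝ E] {d : ℕ}

def IsGreedyPrefix (L : Submodule ℤ E) (b : Fin d → E) (k : ℕ) : Prop :=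
  (prefixImage b k : Set E) ⊆ L ∧
  finrank ℝ (span ℝ (prefixImage b k : Set E)) = k ∧
  (∀ i : Fin d, (i : ℕ) < k → ∀ z ∈ L, z ∉ span ℤ (prefixImage b i : Set E) → ‖b i‖ ≤ ‖z‖) ∧
  ∀ z ∈ L, z ∈ span ℝ (prefixImage b k : Set E) → z ∈ span ℤ (prefixImage b k : Set E)

theorem isGreedyPrefix_zero (L : Submodule ℤ E) (b : Fin d → E) : IsGreedyPrefix L b 0 := by
  have : prefixImage b 0 = ∅ := by simp [prefixImage]
  simp [IsGreedyPrefix, this]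

variable [FiniteDimensional ℝ E] {L : Submodule ℤ E} [DiscreteTopology L]

theorem IsGreedyPrefix.exists_succ [IsZLattice ℝ L] (hd : finrank ℝ E = d) (hd4 : d ≤ 4)
    {b : Fin d → E} {k : ℕ} (hk : k < d) (h : IsGreedyPrefix L b k) :
    ∃ b' : Fin d → E, IsGreedyPrefix L b' (k + 1) := by
  obtain ⟨hsL, hrank, hgreedy, hprim⟩ := h
  set s := prefixImage b k
  have hex : ∃ z ∈ L, z ∉ span ℤ (s : Set E) := by
    by_contra! hLs
    have htop : span ℝ (s : Set E) = ⊤ := by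
      refine eq_top_iff.2 (IsZLattice.span_top (K := ℝ) (L := L) ▸ span_le.2 fun z hz => ?_)
      exact span_le_restrictScalars ℤ ℝ _ (hLs z hz)
    rw [htop, finrank_top, hd] at hrank
    omega
  obtain ⟨v₀, ⟨hv₀L, hv₀s⟩, hmin⟩ := exists_forall_norm_le_of_subset (L := L)
    (P := {z | z ∈ L ∧ z ∉ span ℤ (s : Set E)}) (fun z hz => hz.1) hex
  have hs : ∀ c ∈ s, ‖c‖ ≤ ‖v₀‖ := by
    intro c hc
    obtain ⟨i, hi, rfl⟩ := mem_prefixImage.1 hc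
    exact hgreedy i hi v₀ hv₀L fun h => hv₀s (span_mono (prefixImage_mono b hi.le) h)
  obtain ⟨v, hvL, hvs, hv, hvprim⟩ := exists_norm_eq_forall_mem_span_insert hsL
    ((card_prefixImage_le b k).trans (by omega)) hprim hv₀L hv₀s
    (fun z hzL hz => hmin z ⟨hzL, hz⟩) hs
  refine ⟨Function.update b ⟨k, hk⟩ v, ?_⟩
  unfold IsGreedyPrefix
  rw [prefixImage_update_succ, Finset.coe_insert]
  refine ⟨Set.insert_subset hvL hsL, ?_, fun i hi z hzL hz => ?_, hvprim⟩
  · rw [span_insert, sup_comm, finrank_sup_span_singleton hvs, hrank]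
  rw [prefixImage_update_of_le b hk v (Nat.lt_succ_iff.1 hi)] at hz
  rcases (Nat.lt_succ_iff.1 hi).lt_or_eq with hi | hi
  · rw [Function.update_of_ne (Fin.ne_of_val_ne hi.ne)]
    exact hgreedy i hi z hzL hz
  · obtain rfl : i = ⟨k, hk⟩ := Fin.ext hi
    rw [Function.update_self, hv]
    exact hmin z ⟨hzL, hz⟩

theorem exists_isGreedyPrefix [IsZLattice ℝ L] (hd : finrank ℝ E = d) (hd4 : d ≤ 4) :
    ∀ k ≤ d, ∃ b : Fin d → E, IsGreedyPrefix L b k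
  | 0, _ => ⟨fun _ => 0, isGreedyPrefix_zero L _⟩
  | k + 1, hk =>
    have ⟨_, hb⟩ := exists_isGreedyPrefix hd hd4 k (by omega)
    hb.exists_succ hd hd4 hk

theorem exists_span_eq_forall_norm_le [IsZLattice ℝ L] (hd : finrank ℝ E = d) (hd4 : d ≤ 4) :
    ∃ b : Fin d → E, span ℤ (Set.range b) = L ∧
      ∀ i : Fin d, ∀ z ∈ L, z ∉ span ℤ (prefixImage b i : Set E) → ‖b i‖ ≤ ‖z‖ := by
  obtain ⟨b, hbL, hrank, hgreedy, hprim⟩ := exists_isGreedyPrefix (L := L) hd hd4 d le_rfl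
  rw [prefixImage_eq_image_univ, Finset.coe_image, Finset.coe_univ, Set.image_univ]
    at hbL hrank hprim
  have htop : span ℝ (Set.range b) = ⊤ := Submodule.eq_top_of_finrank_eq (hrank.trans hd.symm)
  refine ⟨b, le_antisymm (span_le.2 hbL) fun z hz => hprim z hz (htop ▸ mem_top), ?_⟩
  exact fun i => hgreedy i i.2

end GreedyBasis

section MatrixInner

variable {d : ℕ} {M : Matrix (Fin d) (Fin d) ℝ}

-- A type synonym, since `Fin d → ℝ` itself carries the sup norm.
def WithMatrixInner (_hM : M.PosDef) : Type := Fin d → ℝ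

instance (hM : M.PosDef) : NormedAddCommGroup (WithMatrixInner hM) :=
  M.toNormedAddCommGroup hM

instance (hM : M.PosDef) : InnerProductSpace ℝ (WithMatrixInner hM) :=
  M.toInnerProductSpace hM.posSemidef

instance (hM : M.PosDef) : FiniteDimensional ℝ (WithMatrixInner hM) :=
  inferInstanceAs (FiniteDimensional ℝ (Fin d → ℝ))

theorem finrank_withMatrixInner (hM : M.PosDef) : finrank ℝ (WithMatrixInner hM) = d :=
  Module.finrank_fin_fun ℝ

theorem norm_withMatrixInner (hM : M.PosDef) (x : WithMatrixInner hM) :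
    ‖x‖ = normM M x := by
  rw [norm_eq_sqrt_real_inner]
  exact congrArg Real.sqrt (dotProduct_comm _ _)

def coordBasis (hM : M.PosDef) : Module.Basis (Fin d) ℝ (WithMatrixInner hM) :=
  Pi.basisFun ℝ (Fin d)

theorem coordBasis_apply (hM : M.PosDef) (j : Fin d) :
    coordBasis hM j = (Pi.single j 1 : Fin d → ℝ) :=
  Pi.basisFun_apply ℝ (Fin d) j

abbrev intLattice (hM : M.PosDef) : Submodule ℤ (WithMatrixInner hM) :=
  span ℤ (Set.range (coordBasis hM))

theorem mem_intLattice_iff (hM : M.PosDef) (x : WithMatrixInner hM) :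
    x ∈ intLattice hM ↔ IsIntVec (d := d) x := by
  rw [intLattice, Module.Basis.mem_span_iff_repr_mem]
  exact forall_congr' fun i => exists_congr fun m => eq_comm

end MatrixInner

theorem exists_eq_sum_of_mem_span_image {R V ι : Type*} [Semiring R] [AddCommMonoid V]
    [Module R V] [Fintype ι] {u : ι → V} {s : Set ι} {z : V} (hz : z ∈ span R (u '' s)) :
    ∃ c : ι → R, (∀ i ∉ s, c i = 0) ∧ z = ∑ i, c i • u i := by
  obtain ⟨l, hl, rfl⟩ := (Finsupp.mem_span_image_iff_linearCombination R).1 hz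
  refine ⟨l, fun i hi => Finsupp.notMem_support_iff.1 fun h => hi (hl h), ?_⟩
  rw [Finsupp.linearCombination_apply, Finsupp.sum_fintype _ _ fun i => zero_smul R (u i)]

theorem abs_det_eq_one_of_single_mem_span {n : Type*} [Fintype n] [DecidableEq n]
    {U : Matrix n n ℝ} (hU : ∀ i j, ∃ m : ℤ, U i j = m)
    (hspan : ∀ j, Pi.single j 1 ∈ span ℤ (Set.range U)) : |U.det| = 1 := by
  choose C hC using hU
  choose D hD using fun j => (mem_span_range_iff_exists_fun ℤ).1 (hspan j)
  have hU : U = (Matrix.of C).map (Int.cast : ℤ → ℝ) := by ext i j; exact hC i j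
  have hDU : (Matrix.of D).map (Int.cast : ℤ → ℝ) * U = 1 := by
    ext j i
    have := congrFun (hD j) i
    rw [Finset.sum_apply] at this
    simp only [Pi.smul_apply, zsmul_eq_mul, Pi.single_apply] at this
    simp [Matrix.mul_apply, Matrix.one_apply, this, eq_comm]
  have hdet : (Matrix.of C).det * (Matrix.of D).det = 1 := by
    have := congrArg Matrix.det hDU
    rw [Matrix.det_mul, Matrix.det_one, hU, ← Int.cast_det, ← Int.cast_det, mul_comm] at this
    exact_mod_cast this
  rw [hU, ← Int.cast_det]
  rcases Int.eq_one_or_neg_one_of_mul_eq_one hdet with h | h <;> simp [h]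

theorem stmt1_general {d : ℕ} (hd4 : d ≤ 4)
    (M : Matrix (Fin d) (Fin d) ℝ) (hM : M.PosDef) :
    ∃ u : Fin d → Fin d → ℝ, IsReducedBasis M u := by
  obtain ⟨b, hspan, hmin⟩ :=
    exists_span_eq_forall_norm_le (L := intLattice hM) (finrank_withMatrixInner hM) hd4
  have hbL : ∀ i, IsIntVec (d := d) (b i) := fun i =>
    (mem_intLattice_iff hM _).1 (hspan ▸ subset_span ⟨i, rfl⟩)
  refine ⟨b, hbL, ?_, fun k z hz hzk => ?_⟩
  · refine abs_det_eq_one_of_single_mem_span hbL fun j => ?_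
    obtain ⟨c, hc⟩ := (mem_span_range_iff_exists_fun ℤ).1
      (hspan ▸ subset_span ⟨j, rfl⟩ : coordBasis hM j ∈ span ℤ (Set.range b))
    exact (mem_span_range_iff_exists_fun ℤ).2 ⟨c, hc.trans (coordBasis_apply hM j)⟩
  · rw [← norm_withMatrixInner, ← norm_withMatrixInner hM z]
    refine hmin k z ((mem_intLattice_iff hM z).2 hz) fun h => hzk ?_
    simp only [prefixImage, Finset.coe_image, Finset.coe_filter, Finset.mem_univ, true_and] at h
    obtain ⟨c, hc, rfl⟩ := exists_eq_sum_of_mem_span_image h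
    exact ⟨c, hc, by simp only [← Int.cast_smul_eq_zsmul ℝ]; rfl⟩

/-- Theorem `thRed` (existence part): for `1 ≤ d ≤ 4` and any symmetric positive
definite matrix `M`, there exists an `M`-reduced basis of `ℤ^d`. -/
theorem stmt1 {d : ℕ} (hd1 : 1 ≤ d) (hd4 : d ≤ 4)
    (M : Matrix (Fin d) (Fin d) ℝ) (hM : M.PosDef) :
    ∃ u : Fin d → Fin d → ℝ, IsReducedBasis M u :=
  stmt1_general hd4 M hM
end
end

section
/- Let M ∈ S_2^+ and let (u_1,u_2) be an M-reduced basis of ℤ². Let u := u_1 and v := ε·u_2, where ε ∈ {−1,1} is chosen so that uᵀ M v ≥ 0. Then the collection 𝒯 of the six triangles having 0 as a vertex together with one of the pairs {u,v}, {v,v−u}, {v−u,−u}, {−u,−v}, {−v,u−v}, {u−v,u} is an M-reduced mesh. -/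
open Matrix
open scoped BigOperators ENNReal Classical

noncomputable section

/-!
The six triangles are the image, under the linear map `f` with columns `u` and `v`, of the
standard hexagonal fan with vertices `±e₁, ±e₂, ±(e₂ - e₁)`, and `|det f| = 1`. The conforming and
neighbourhood properties are checked on the standard fan: the rotation `e₁ ↦ e₂ ↦ e₂ - e₁` of
order six permutes its triangles cyclically, so only the pairs `(T₀, Tₘ)` remain, and each of
these is separated by an explicit linear functional. Every triangle has determinant `det f`,
hence area `1/2`. Writing `a = ‖u‖²_M`, `b = ‖v‖²_M`, `c = uᵀMv`, the choice of `ε` gives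
`c ≥ 0`, and minimality gives `a ≤ b` (for `u`) and `2c ≤ a` (for `u₂`, compared with `v - u`);
the products of consecutive vertices of the fan are `c`, `b - c` and `a - c`.
-/

open MeasureTheory

section Convex

variable {𝕜 E : Type*} [Field 𝕜] [LinearOrder 𝕜] [IsStrictOrderedRing 𝕜]
  [AddCommGroup E] [Module 𝕜 E]

theorem convexHull_inter_convexHull_of_separating [DecidableEq E] {S T : Finset E}
    (φ : E →ₗ[𝕜] 𝕜) (hS : ∀ x ∈ S, 0 ≤ φ x) (hT : ∀ x ∈ T, φ x ≤ 0)
    (hST : ∀ x ∈ S, φ x = 0 → x ∈ T) :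
    convexHull 𝕜 (S : Set E) ∩ convexHull 𝕜 (T : Set E) = convexHull 𝕜 (↑(S ∩ T) : Set E) := by
  refine subset_antisymm ?_ (Set.subset_inter (convexHull_mono (by simp)) (convexHull_mono (by simp)))
  rintro _ ⟨hpS, hpT⟩
  obtain ⟨w, hw₀, hw₁, rfl⟩ := Finset.mem_convexHull'.1 hpS
  have hφ_nonpos : φ (∑ y ∈ S, w y • y) ≤ 0 :=
    convexHull_min (t := {x | φ x ≤ 0}) hT (convex_halfSpace_le φ.isLinear 0) hpT
  have hterm : ∀ y ∈ S, w y * φ y = 0 := by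
    refine (Finset.sum_eq_zero_iff_of_nonneg fun y hy ↦ mul_nonneg (hw₀ y hy) (hS y hy)).1 ?_
    refine le_antisymm ?_ (Finset.sum_nonneg fun y hy ↦ mul_nonneg (hw₀ y hy) (hS y hy))
    simpa [map_sum] using hφ_nonpos
  have hw_out : ∀ y ∈ S, y ∉ S ∩ T → w y = 0 := fun y hy hyST ↦
    (mul_eq_zero.1 (hterm y hy)).resolve_right fun h ↦ hyST (Finset.mem_inter.2 ⟨hy, hST y hy h⟩)
  refine Finset.mem_convexHull'.2 ⟨w, fun y hy ↦ hw₀ y (Finset.mem_of_mem_inter_left hy), ?_, ?_⟩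
  · rw [← hw₁]
    exact Finset.sum_subset Finset.inter_subset_left fun y hy hyST ↦ hw_out y hy hyST
  · exact Finset.sum_subset Finset.inter_subset_left fun y hy hyST ↦ by simp [hw_out y hy hyST]

theorem smul_add_smul_mem_convexHull_triangle (a b : E) {s t : 𝕜} (hs : 0 ≤ s) (ht : 0 ≤ t)
    (hst : s + t ≤ 1) : s • a + t • b ∈ convexHull 𝕜 {0, a, b} := by
  have h := (convex_convexHull 𝕜 {0, a, b}).sum_mem (t := Finset.univ) (w := ![1 - s - t, s, t])
    (z := ![0, a, b]) (by simp [Fin.forall_fin_succ]; grind) (by simp [Fin.sum_univ_succ])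
    (by simp [Fin.forall_fin_succ]; exact ⟨subset_convexHull 𝕜 _ (by simp),
      subset_convexHull 𝕜 _ (by simp), subset_convexHull 𝕜 _ (by simp)⟩)
  simpa [Fin.sum_univ_succ] using h

end Convex

theorem convexHull_image_inter_convexHull_image {𝕜 E F : Type*} [Semiring 𝕜] [PartialOrder 𝕜]
    [AddCommGroup E] [Module 𝕜 E] [AddCommGroup F] [Module 𝕜 F] [DecidableEq E] [DecidableEq F]
    {S T : Finset E} (f : E →ₗ[𝕜] F) (hf : Function.Injective f)
    (h : convexHull 𝕜 (S : Set E) ∩ convexHull 𝕜 (T : Set E) = convexHull 𝕜 (↑(S ∩ T) : Set E)) :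
    convexHull 𝕜 (↑(S.image f) : Set F) ∩ convexHull 𝕜 (↑(T.image f) : Set F)
      = convexHull 𝕜 (↑(S.image f ∩ T.image f) : Set F) := by
  simp only [← Finset.image_inter _ _ hf, Finset.coe_image, ← f.image_convexHull,
    ← Set.image_inter hf, h]

local notation "ℝ²" => Fin 2 → ℝ

theorem volume_stdTriangle_prod :
    volume {q : ℝ × ℝ | 0 ≤ q.1 ∧ 0 ≤ q.2 ∧ q.1 + q.2 ≤ 1} = ENNReal.ofReal (1 / 2) := by
  have hmeas : MeasurableSet {q : ℝ × ℝ | 0 ≤ q.1 ∧ 0 ≤ q.2 ∧ q.1 + q.2 ≤ 1} :=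
    (measurableSet_le measurable_const measurable_fst).inter
      ((measurableSet_le measurable_const measurable_snd).inter
        (measurableSet_le (measurable_fst.add measurable_snd) measurable_const))
  have hfiber (x : ℝ) : volume (Prod.mk x ⁻¹' {q : ℝ × ℝ | 0 ≤ q.1 ∧ 0 ≤ q.2 ∧ q.1 + q.2 ≤ 1})
      = (Set.Icc (0 : ℝ) 1).indicator (fun x ↦ ENNReal.ofReal (1 - x)) x := by
    by_cases hx : 0 ≤ x
    · have : Prod.mk x ⁻¹' {q : ℝ × ℝ | 0 ≤ q.1 ∧ 0 ≤ q.2 ∧ q.1 + q.2 ≤ 1} = Set.Icc 0 (1 - x) := by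
        ext y; simp only [Set.mem_preimage, Set.mem_ofPred_eq, Set.mem_Icc]; grind
      rw [this, Real.volume_Icc, Set.indicator_apply]
      split_ifs with h
      · simp
      · simp only [Set.mem_Icc, not_and, not_le] at h
        rw [ENNReal.ofReal_eq_zero]
        linarith [h hx]
    · have : Prod.mk x ⁻¹' {q : ℝ × ℝ | 0 ≤ q.1 ∧ 0 ≤ q.2 ∧ q.1 + q.2 ≤ 1} = ∅ := by
        ext y; simp [hx]
      rw [this, Set.indicator_of_notMem (by simp [hx])]
      simp
  rw [Measure.volume_eq_prod, Measure.prod_apply hmeas]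
  simp_rw [hfiber]
  rw [lintegral_indicator measurableSet_Icc, ← ofReal_integral_eq_lintegral_ofReal,
    integral_Icc_eq_integral_Ioc, ← intervalIntegral.integral_of_le zero_le_one]
  · rw [intervalIntegral.integral_sub intervalIntegrable_const intervalIntegral.intervalIntegrable_id]
    norm_num
  · exact (continuous_const.sub continuous_id).integrableOn_Icc
  · exact (ae_restrict_iff' measurableSet_Icc).2 (Filter.Eventually.of_forall fun x hx ↦ by
      simp only [Set.mem_Icc] at hx; simp [hx.2])

theorem convexHull_stdTriangle :
    convexHull ℝ {0, ![1, 0], ![0, 1]} = {p : ℝ² | 0 ≤ p 0 ∧ 0 ≤ p 1 ∧ p 0 + p 1 ≤ 1} := by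
  refine subset_antisymm (convexHull_min ?_ ?_) fun p ⟨h0, h1, h01⟩ ↦ ?_
  · simp [Set.insert_subset_iff]
  · rintro p ⟨hp0, hp1, hp⟩ q ⟨hq0, hq1, hq⟩ s t hs ht hst
    simp only [Set.mem_ofPred_eq, Pi.add_apply, Pi.smul_apply, smul_eq_mul]
    refine ⟨by positivity, by positivity, ?_⟩
    nlinarith
  · rw [show p = p 0 • ![1, 0] + p 1 • ![0, 1] by ext i; fin_cases i <;> simp]
    exact smul_add_smul_mem_convexHull_triangle _ _ h0 h1 h01

theorem volume_convexHull_stdTriangle :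
    volume (convexHull ℝ {0, ![1, 0], ![0, 1]} : Set ℝ²) = ENNReal.ofReal (1 / 2) := by
  have : convexHull ℝ {0, ![1, 0], ![0, 1]} = MeasurableEquiv.finTwoArrow ⁻¹'
      {q : ℝ × ℝ | 0 ≤ q.1 ∧ 0 ≤ q.2 ∧ q.1 + q.2 ≤ 1} := by
    rw [convexHull_stdTriangle]; rfl
  rw [this, (volume_preserving_finTwoArrow ℝ).measure_preimage
    (by measurability), volume_stdTriangle_prod]

theorem det_of_pair (a b : ℝ²) : (Matrix.of ![a, b]).det = a 0 * b 1 - a 1 * b 0 := by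
  simp [Matrix.det_fin_two]

def triangleMap (a b : ℝ²) : ℝ² →ₗ[ℝ] ℝ² := Matrix.toLin' (Matrix.of ![a, b])ᵀ

theorem triangleMap_apply (a b x : ℝ²) : triangleMap a b x = x 0 • a + x 1 • b := by
  ext i
  simp [triangleMap, Matrix.mulVec, dotProduct, Fin.sum_univ_two, mul_comm]

theorem det_triangleMap (a b : ℝ²) :
    LinearMap.det (triangleMap a b) = (Matrix.of ![a, b]).det := by
  rw [triangleMap, LinearMap.det_toLin', Matrix.det_transpose]

theorem triangleMap_bijective {a b : ℝ²} (h : (Matrix.of ![a, b]).det ≠ 0) :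
    Function.Bijective (triangleMap a b) := by
  rw [← Module.End.isUnit_iff, LinearMap.isUnit_iff_isUnit_det, det_triangleMap]
  exact h.isUnit

theorem image_triangleMap_stdTriangle (a b : ℝ²) :
    triangleMap a b '' {0, ![1, 0], ![0, 1]} = {0, a, b} := by
  simp [Set.image_insert_eq, triangleMap_apply]

theorem volume_convexHull_triangle (a b : ℝ²) :
    volume (convexHull ℝ {0, a, b}) = ENNReal.ofReal (|(Matrix.of ![a, b]).det| / 2) := by
  rw [← image_triangleMap_stdTriangle, ← LinearMap.image_convexHull,
    Measure.addHaar_image_linearMap, det_triangleMap, volume_convexHull_stdTriangle,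
    ← ENNReal.ofReal_mul (abs_nonneg _)]
  ring_nf

theorem isSimplex_triangle {a b : ℝ²} (h : (Matrix.of ![a, b]).det ≠ 0) :
    IsSimplex 2 {0, a, b} := by
  rw [det_of_pair] at h
  have hcoll : ¬ Collinear ℝ {(0 : ℝ²), a, b} := by
    rw [collinear_iff_of_mem (Set.mem_insert _ _)]
    rintro ⟨w, hw⟩
    obtain ⟨r, rfl⟩ := hw a (by simp)
    obtain ⟨s, rfl⟩ := hw b (by simp)
    apply h
    simp only [vadd_eq_add, add_zero, Pi.smul_apply, smul_eq_mul]
    ring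
  have ha : a ≠ 0 := by rintro rfl; simp at h
  have hb : b ≠ 0 := by rintro rfl; simp at h
  have hab : a ≠ b := by rintro rfl; exact h (by ring)
  refine ⟨?_, ?_⟩
  · rw [Finset.card_insert_of_notMem (by simp [ha.symm, hb.symm]),
      Finset.card_pair hab]
  · have := (affineIndependent_iff_not_collinear_set.2 hcoll).range
    rwa [show Set.range ![(0 : ℝ²), a, b] = ({0, a, b} : Finset ℝ²) by
      simp [Matrix.range_cons, Set.insert_comm, Set.pair_comm]] at this

section HexFan

variable {E : Type*} [AddCommGroup E]

def hexVertex (u v : E) : Fin 6 → E := ![u, v, v - u, -u, -v, u - v]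

theorem hexVertex_succ (u v : E) (k : Fin 6) :
    hexVertex u v (k + 1) = hexVertex v (v - u) k := by
  fin_cases k <;> simp [hexVertex]

theorem map_hexVertex {F G : Type*} [AddCommGroup F] [FunLike G E F] [AddMonoidHomClass G E F]
    (f : G) (u v : E) (k : Fin 6) : f (hexVertex u v k) = hexVertex (f u) (f v) k := by
  fin_cases k <;> simp [hexVertex]

variable [DecidableEq E]

def hexTriangle (u v : E) (k : Fin 6) : Finset E := {0, hexVertex u v k, hexVertex u v (k + 1)}

def hexFan (u v : E) : Finset (Finset E) := Finset.univ.image (hexTriangle u v)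

theorem hexFan_eq (u v : E) : hexFan u v = {{0, u, v}, {0, v, v - u}, {0, v - u, -u},
    {0, -u, -v}, {0, -v, u - v}, {0, u - v, u}} := by
  ext V
  simp [hexFan, hexTriangle, hexVertex, Fin.exists_fin_succ, eq_comm]

theorem hexTriangle_succ (u v : E) (k : Fin 6) :
    hexTriangle u v (k + 1) = hexTriangle v (v - u) k := by
  simp only [hexTriangle, hexVertex_succ]

theorem image_hexTriangle {F G : Type*} [AddCommGroup F] [DecidableEq F] [FunLike G E F]
    [AddMonoidHomClass G E F] (f : G) (u v : E) (k : Fin 6) :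
    (hexTriangle u v k).image f = hexTriangle (f u) (f v) k := by
  simp [hexTriangle, Finset.image_insert, map_hexVertex]

end HexFan

theorem det_hexVertex_succ (u v : ℝ²) (k : Fin 6) :
    (Matrix.of ![hexVertex u v k, hexVertex u v (k + 1)]).det = (Matrix.of ![u, v]).det := by
  fin_cases k <;> simp [hexVertex, det_of_pair] <;> ring

local notation "e₁" => (![1, 0] : ℝ²)
local notation "e₂" => (![0, 1] : ℝ²)

abbrev hexRotation : ℝ² →ₗ[ℝ] ℝ² := triangleMap e₂ (e₂ - e₁)

theorem image_hexTriangle_hexRotation (k : Fin 6) :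
    (hexTriangle e₁ e₂ k).image hexRotation = hexTriangle e₁ e₂ (k + 1) := by
  rw [image_hexTriangle, hexTriangle_succ]
  congr 1 <;> ext i <;> fin_cases i <;> simp [triangleMap_apply]

theorem exists_injective_image_hexTriangle_eq_add (i : Fin 6) :
    ∃ f : ℝ² →ₗ[ℝ] ℝ², Function.Injective f ∧
      ∀ k, (hexTriangle e₁ e₂ k).image f = hexTriangle e₁ e₂ (k + i) := by
  induction i using Fin.induction with
  | zero => exact ⟨LinearMap.id, Function.injective_id, by simp⟩
  | succ i ih =>
    obtain ⟨f, hf, hfT⟩ := ih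
    refine ⟨hexRotation ∘ₗ f, (triangleMap_bijective (by simp)).1.comp hf,
      fun k ↦ ?_⟩
    rw [LinearMap.coe_comp, ← Finset.image_image, hfT, image_hexTriangle_hexRotation,
      ← Fin.coeSucc_eq_succ, add_assoc]

theorem convexHull_stdHexTriangle_zero_inter (m : Fin 6) :
    convexHull ℝ ↑(hexTriangle e₁ e₂ 0) ∩ convexHull ℝ ↑(hexTriangle e₁ e₂ m)
      = convexHull ℝ (↑(hexTriangle e₁ e₂ 0 ∩ hexTriangle e₁ e₂ m) : Set ℝ²) := by
  fin_cases m
  · simp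
  · apply convexHull_inter_convexHull_of_separating (dotProductBilin ℝ ℝ ![1, 0]) <;>
      simp [hexTriangle, hexVertex, dotProduct]
  · apply convexHull_inter_convexHull_of_separating (dotProductBilin ℝ ℝ ![2, 1]) <;>
      simp [hexTriangle, hexVertex, dotProduct]
  · apply convexHull_inter_convexHull_of_separating (dotProductBilin ℝ ℝ ![1, 1]) <;>
      simp [hexTriangle, hexVertex, dotProduct]
  · apply convexHull_inter_convexHull_of_separating (dotProductBilin ℝ ℝ ![1, 2]) <;>
      simp [hexTriangle, hexVertex, dotProduct]
  · apply convexHull_inter_convexHull_of_separating (dotProductBilin ℝ ℝ ![0, 1]) <;>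
      simp [hexTriangle, hexVertex, dotProduct]

theorem convexHull_stdHexTriangle_inter (i j : Fin 6) :
    convexHull ℝ ↑(hexTriangle e₁ e₂ i) ∩ convexHull ℝ ↑(hexTriangle e₁ e₂ j)
      = convexHull ℝ (↑(hexTriangle e₁ e₂ i ∩ hexTriangle e₁ e₂ j) : Set ℝ²) := by
  obtain ⟨f, hf, hfT⟩ := exists_injective_image_hexTriangle_eq_add i
  have := convexHull_image_inter_convexHull_image f hf (convexHull_stdHexTriangle_zero_inter (j - i))
  rwa [hfT, hfT, zero_add, sub_add_cancel] at this

theorem iUnion_convexHull_stdHexTriangle_mem_nhds :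
    (⋃ k, convexHull ℝ (↑(hexTriangle e₁ e₂ k) : Set ℝ²)) ∈ nhds 0 := by
  have hopen : IsOpen {p : ℝ² | |p 0| + |p 1| < 1} := isOpen_lt (by fun_prop) continuous_const
  refine Filter.mem_of_superset (hopen.mem_nhds (by simp)) fun p hp ↦ ?_
  have key : ∀ k (s t : ℝ), 0 ≤ s → 0 ≤ t → s + t ≤ 1 →
      p = s • hexVertex e₁ e₂ k + t • hexVertex e₁ e₂ (k + 1) →
      p ∈ ⋃ k, convexHull ℝ (↑(hexTriangle e₁ e₂ k) : Set ℝ²) := by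
    rintro k s t hs ht hst rfl
    exact Set.mem_iUnion.2 ⟨k, by
      simpa [hexTriangle] using smul_add_smul_mem_convexHull_triangle _ _ hs ht hst⟩
  simp only [Set.mem_ofPred_eq] at hp
  have := le_abs_self (p 0); have := neg_abs_le (p 0)
  have := le_abs_self (p 1); have := neg_abs_le (p 1)
  rcases le_or_gt 0 (p 0) with hx | hx <;> rcases le_or_gt 0 (p 1) with hy | hy <;>
    rcases le_or_gt 0 (p 0 + p 1) with hxy | hxy
  · exact key 0 (p 0) (p 1) hx hy (by linarith) (by ext i; fin_cases i <;> simp [hexVertex])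
  · linarith
  · exact key 5 (-p 1) (p 0 + p 1) (by linarith) hxy (by linarith)
      (by ext i; fin_cases i <;> simp [hexVertex])
  · exact key 4 (-p 0 - p 1) (p 0) (by linarith) hx (by linarith)
      (by ext i; fin_cases i <;> simp [hexVertex])
  · exact key 1 (p 0 + p 1) (-p 0) hxy (by linarith) (by linarith)
      (by ext i; fin_cases i <;> simp [hexVertex])
  · exact key 2 (p 1) (-p 0 - p 1) hy (by linarith) (by linarith)
      (by ext i; fin_cases i <;> simp [hexVertex])
  · linarith
  · exact key 3 (-p 0) (-p 1) (by linarith) (by linarith) (by linarith)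
      (by ext i; fin_cases i <;> simp [hexVertex])

section Fan

variable {u v : ℝ²}

theorem convexHull_hexTriangle_inter (h : (Matrix.of ![u, v]).det ≠ 0) (i j : Fin 6) :
    convexHull ℝ ↑(hexTriangle u v i) ∩ convexHull ℝ ↑(hexTriangle u v j)
      = convexHull ℝ (↑(hexTriangle u v i ∩ hexTriangle u v j) : Set ℝ²) := by
  have := convexHull_image_inter_convexHull_image _ (triangleMap_bijective h).1
    (convexHull_stdHexTriangle_inter i j)
  simpa [image_hexTriangle, triangleMap_apply] using this

theorem isMesh_hexFan (h : (Matrix.of ![u, v]).det ≠ 0) : IsMesh 2 (hexFan u v) := by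
  simp only [IsMesh, hexFan, Finset.forall_mem_image, Finset.mem_univ, forall_const]
  exact ⟨fun k ↦ isSimplex_triangle (by rwa [det_hexVertex_succ]),
    convexHull_hexTriangle_inter h⟩

theorem biUnion_convexHull_hexFan_mem_nhds (h : (Matrix.of ![u, v]).det ≠ 0) :
    (⋃ V ∈ hexFan u v, convexHull ℝ (V : Set ℝ²)) ∈ nhds 0 := by
  have := (LinearMap.isOpenMap_of_finiteDimensional _ (triangleMap_bijective h).2).image_mem_nhds
    iUnion_convexHull_stdHexTriangle_mem_nhds
  simp only [map_zero, Set.image_iUnion, LinearMap.image_convexHull, ← Finset.coe_image,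
    image_hexTriangle] at this
  simpa [hexFan, triangleMap_apply] using this

theorem volume_convexHull_hexTriangle (k : Fin 6) :
    volume (convexHull ℝ (↑(hexTriangle u v k) : Set ℝ²))
      = ENNReal.ofReal (|(Matrix.of ![u, v]).det| / 2) := by
  simpa [hexTriangle, det_hexVertex_succ] using
    volume_convexHull_triangle (hexVertex u v k) (hexVertex u v (k + 1))

end Fan

section Gram

variable {n : Type*} [Fintype n] {M : Matrix n n ℝ}

theorem dotProduct_mulVec_comm (hM : M.IsSymm) (x y : n → ℝ) :
    x ⬝ᵥ M *ᵥ y = y ⬝ᵥ M *ᵥ x := by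
  rw [← dotProduct_transpose_mulVec, hM.eq]

theorem hexVertex_dotProduct_mulVec_succ_nonneg (hM : M.IsSymm) {u v : n → ℝ}
    (huv : 0 ≤ u ⬝ᵥ M *ᵥ v) (hle : u ⬝ᵥ M *ᵥ u ≤ v ⬝ᵥ M *ᵥ v)
    (hle' : v ⬝ᵥ M *ᵥ v ≤ (v - u) ⬝ᵥ M *ᵥ (v - u)) (k : Fin 6) :
    0 ≤ hexVertex u v k ⬝ᵥ M *ᵥ hexVertex u v (k + 1) := by
  have hvu := dotProduct_mulVec_comm hM v u
  simp only [mulVec_sub, dotProduct_sub, sub_dotProduct] at hle'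
  fin_cases k <;>
    simp [hexVertex, mulVec_sub, mulVec_neg, dotProduct_sub, sub_dotProduct] <;> linarith

theorem Matrix.PosSemidef.dotProduct_mulVec_self_nonneg (hM : M.PosSemidef) (x : n → ℝ) :
    0 ≤ x ⬝ᵥ M *ᵥ x := by
  simpa using hM.dotProduct_mulVec_nonneg x

end Gram

section NormM

variable {d : ℕ} {M : Matrix (Fin d) (Fin d) ℝ}

theorem dotProduct_mulVec_self_le_of_normM_le (hM : M.PosSemidef) {x y : Fin d → ℝ}
    (h : normM M x ≤ normM M y) : x ⬝ᵥ M *ᵥ x ≤ y ⬝ᵥ M *ᵥ y :=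
  (Real.sqrt_le_sqrt_iff (hM.dotProduct_mulVec_self_nonneg y)).1 h

theorem normM_neg (x : Fin d → ℝ) : normM M (-x) = normM M x := by
  simp [normM, mulVec_neg]

end NormM

section Lattice

variable {d : ℕ}

theorem IsIntVec.neg {z : Fin d → ℝ} (hz : IsIntVec z) : IsIntVec (-z) := fun i ↦ by
  obtain ⟨m, hm⟩ := hz i
  exact ⟨-m, by simp [hm]⟩

theorem IsIntVec.sub {y z : Fin d → ℝ} (hy : IsIntVec y) (hz : IsIntVec z) :
    IsIntVec (y - z) := fun i ↦ by
  obtain ⟨m, hm⟩ := hy i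
  obtain ⟨k, hk⟩ := hz i
  exact ⟨m - k, by simp [hm, hk]⟩

theorem isIntVec_hexVertex {u v : Fin d → ℝ} (hu : IsIntVec u) (hv : IsIntVec v) (k : Fin 6) :
    IsIntVec (hexVertex u v k) := by
  fin_cases k
  exacts [hu, hv, hv.sub hu, hu.neg, hv.neg, hu.sub hv]

theorem InLatticeSpan.eq_zero {u : Fin d → Fin d → ℝ} {z : Fin d → ℝ}
    (hz : InLatticeSpan u 0 z) : z = 0 := by
  obtain ⟨c, hc, rfl⟩ := hz
  simp [hc]

end Lattice

theorem InLatticeSpan.det_eq_zero {u : Fin 2 → Fin 2 → ℝ} {z : ℝ²} (hz : InLatticeSpan u 1 z) :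
    (Matrix.of ![u 0, z]).det = 0 := by
  obtain ⟨c, hc, rfl⟩ := hz
  have hz : ∑ i, (c i : ℝ) • u i = (c 0 : ℝ) • u 0 := by simp [Fin.sum_univ_two, hc 1 (by simp)]
  rw [hz, det_of_pair]
  simp only [Pi.smul_apply, smul_eq_mul]
  ring

section ReducedBasis

variable {M : Matrix (Fin 2) (Fin 2) ℝ} {u₀ : Fin 2 → Fin 2 → ℝ} {v : ℝ²}

theorem IsReducedBasis.abs_det_eq_one (hu₀ : IsReducedBasis M u₀) (hv : v = u₀ 1 ∨ v = -u₀ 1) :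
    |(Matrix.of ![u₀ 0, v]).det| = 1 := by
  have h : |(Matrix.of ![u₀ 0, u₀ 1]).det| = 1 := by
    convert hu₀.2.1 using 3
    ext i j; fin_cases i <;> rfl
  rcases hv with rfl | rfl
  · exact h
  · rw [← h, det_of_pair, det_of_pair, ← abs_neg]
    simp only [Pi.neg_apply]
    ring_nf

theorem IsReducedBasis.isIntVec (hu₀ : IsReducedBasis M u₀) (hv : v = u₀ 1 ∨ v = -u₀ 1) :
    IsIntVec v := by
  rcases hv with rfl | rfl
  exacts [hu₀.1 1, (hu₀.1 1).neg]

theorem IsReducedBasis.gram_le (hM : M.PosSemidef) (hu₀ : IsReducedBasis M u₀)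
    (hv : v = u₀ 1 ∨ v = -u₀ 1) :
    u₀ 0 ⬝ᵥ M *ᵥ u₀ 0 ≤ v ⬝ᵥ M *ᵥ v ∧ v ⬝ᵥ M *ᵥ v ≤ (v - u₀ 0) ⬝ᵥ M *ᵥ (v - u₀ 0) := by
  have hdet := hu₀.abs_det_eq_one hv
  have hnorm : normM M v = normM M (u₀ 1) := by rcases hv with rfl | rfl <;> simp [normM_neg]
  refine ⟨dotProduct_mulVec_self_le_of_normM_le hM ?_, dotProduct_mulVec_self_le_of_normM_le hM ?_⟩
  · refine hu₀.2.2 0 v (hu₀.isIntVec hv) fun h ↦ ?_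
    simp [h.eq_zero, det_of_pair] at hdet
  · rw [hnorm]
    refine hu₀.2.2 1 (v - u₀ 0) ((hu₀.isIntVec hv).sub (hu₀.1 0)) fun h ↦ ?_
    have h₀ : (Matrix.of ![u₀ 0, v]).det = 0 := by
      rw [← h.det_eq_zero, det_of_pair, det_of_pair]
      simp only [Pi.sub_apply]
      ring
    simp [h₀] at hdet

end ReducedBasis

theorem isReducedMesh_hexFan {M : Matrix (Fin 2) (Fin 2) ℝ} (hM : M.PosSemidef) {u v : ℝ²}
    (hdet : |(Matrix.of ![u, v]).det| = 1) (hu : IsIntVec u) (hv : IsIntVec v)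
    (huv : 0 ≤ u ⬝ᵥ M *ᵥ v) (hle : u ⬝ᵥ M *ᵥ u ≤ v ⬝ᵥ M *ᵥ v)
    (hle' : v ⬝ᵥ M *ᵥ v ≤ (v - u) ⬝ᵥ M *ᵥ (v - u)) :
    IsReducedMesh M (hexFan u v) := by
  have hdet₀ : (Matrix.of ![u, v]).det ≠ 0 := fun h ↦ by simp [h] at hdet
  have hsymm : M.IsSymm := isHermitian_iff_isSymm.1 hM.isHermitian
  refine ⟨isMesh_hexFan hdet₀, biUnion_convexHull_hexFan_mem_nhds hdet₀, ?_, ?_, ?_, ?_⟩ <;>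
    simp only [hexFan, Finset.forall_mem_image, Finset.mem_univ, forall_const]
  · intro k x hx
    simp only [hexTriangle, Finset.mem_insert, Finset.mem_singleton] at hx
    rcases hx with rfl | rfl | rfl
    exacts [fun i ↦ ⟨0, by simp⟩, isIntVec_hexVertex hu hv k, isIntVec_hexVertex hu hv (k + 1)]
  · intro k
    rw [volume_convexHull_hexTriangle, hdet]
    norm_num
  · simp [hexTriangle]
  · intro k x hx y hy hx₀ hy₀
    simp only [hexTriangle, Finset.mem_insert, Finset.mem_singleton, hx₀, hy₀, false_or] at hx hy
    have hsucc := hexVertex_dotProduct_mulVec_succ_nonneg hsymm huv hle hle' k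
    rcases hx with rfl | rfl <;> rcases hy with rfl | rfl
    · exact hM.dotProduct_mulVec_self_nonneg _
    · exact hsucc
    · rwa [dotProduct_mulVec_comm hsymm]
    · exact hM.dotProduct_mulVec_self_nonneg _

/-- Proposition `propNeigh2`: explicit construction of an `M`-reduced mesh in dimension 2
from an `M`-reduced basis. -/
theorem stmt6 (M : Matrix (Fin 2) (Fin 2) ℝ) (hM : M.PosDef)
    (u₀ : Fin 2 → Fin 2 → ℝ) (hu₀ : IsReducedBasis M u₀)
    (ε : ℝ) (hε : ε = 1 ∨ ε = -1)
    (u v : Fin 2 → ℝ) (hu : u = u₀ 0) (hv : v = ε • u₀ 1)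
    (huv : 0 ≤ u ⬝ᵥ M.mulVec v)
    (𝒯 : Finset (Finset (Fin 2 → ℝ)))
    (h𝒯 : 𝒯 = {{0, u, v}, {0, v, v - u}, {0, v - u, -u},
               {0, -u, -v}, {0, -v, u - v}, {0, u - v, u}}) :
    IsReducedMesh M 𝒯 := by
  have hv' : v = u₀ 1 ∨ v = -u₀ 1 := by rcases hε with rfl | rfl <;> simp [hv]
  subst hu h𝒯
  rw [← hexFan_eq]
  obtain ⟨hle, hle'⟩ := hu₀.gram_le hM.posSemidef hv'
  exact isReducedMesh_hexFan hM.posSemidef (hu₀.abs_det_eq_one hv') (hu₀.1 0) (hu₀.isIntVec hv')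
    huv hle hle'

end
end

section
/- Let M ∈ S_d^+ and let v_1,…,v_k ∈ ℝ^d be linearly independent vectors such that v_iᵀ M v_j ≥ 0 for all 1 ≤ i ≤ j ≤ k. Let Ξ := {α = (α_1,…,α_k) ∈ ℝ_+^k : α_1 + ⋯ + α_k = 1}, let δ_1,…,δ_k ∈ ℝ, and let δ := min_{α ∈ Ξ} (‖Σ_{i=1}^k α_i v_i‖_M + Σ_{i=1}^k α_i δ_i). Then this minimum is attained at a unique α ∈ Ξ; and if this minimizer α has all coefficients positive, then δ > δ_i for each 1 ≤ i ≤ k (the causality property). -/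
open Matrix
open scoped BigOperators ENNReal Classical

noncomputable section

/-!
Through a factorisation `M = Bᵀ B`, the vectors `e i := B v i` live in a Euclidean space, where
`‖·‖_M` becomes the Euclidean norm and the cost is `f α = ‖∑ α i • e i‖ + α ⬝ᵥ δ`. A minimum exists
by compactness of the simplex. If `α` and `β` both minimize, the midpoint shows that equality
holds in the triangle inequality for `∑ α i • e i` and `∑ β i • e i`, so by strict convexity of the
Euclidean norm they lie on the same ray; linear independence and `∑ α i = ∑ β i = 1` then force
`α = β`. For causality, moving a little mass from `α i` to the other coefficients (in proportion)
changes the norm part at first order by `-t ⟪e i, w⟫ / ‖w‖ < 0`, where `w = ∑ α j • e j` and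
`⟪e i, w⟫ ≥ α i ‖e i‖² > 0` because the `e j` are pairwise acute, while the linear part changes by
`t (f α - δ i)` up to the normalisation; since the cost cannot decrease, `δ i < f α`.
-/

open scoped MatrixOrder in
theorem Matrix.PosDef.exists_injective_linearMap_inner_eq {n : Type*} [Fintype n]
    {M : Matrix n n ℝ} (hM : M.PosDef) :
    ∃ T : (n → ℝ) →ₗ[ℝ] EuclideanSpace ℝ n,
      Function.Injective T ∧ ∀ u w, inner ℝ (T u) (T w) = u ⬝ᵥ M *ᵥ w := by
  obtain ⟨B, rfl⟩ := CStarAlgebra.nonneg_iff_eq_star_mul_self.mp hM.posSemidef.nonneg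
  have hinner : ∀ u w, inner ℝ (WithLp.toLp 2 (B *ᵥ u)) (WithLp.toLp 2 (B *ᵥ w))
      = u ⬝ᵥ (star B * B) *ᵥ w := by
    intro u w
    rw [EuclideanSpace.inner_toLp_toLp, star_trivial, dotProduct_mulVec, ← mulVec_mulVec,
      star_eq_conjTranspose, conjTranspose_eq_transpose_of_trivial, mulVec_transpose]
    exact dotProduct_comm _ _
  refine ⟨(WithLp.linearEquiv 2 ℝ (n → ℝ)).symm.toLinearMap ∘ₗ B.mulVecLin, ?_, hinner⟩
  refine (injective_iff_map_eq_zero _).mpr fun u hu => ?_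
  by_contra hne
  have hpos := hM.dotProduct_mulVec_pos hne
  rw [star_trivial, ← hinner] at hpos
  exact hpos.ne' (by simp [show WithLp.toLp 2 (B *ᵥ u) = 0 from hu])

theorem normM_eq_norm {d : ℕ} {M : Matrix (Fin d) (Fin d) ℝ} {E : Type*} [NormedAddCommGroup E]
    [InnerProductSpace ℝ E] {T : (Fin d → ℝ) →ₗ[ℝ] E}
    (hT : ∀ u w, inner ℝ (T u) (T w) = u ⬝ᵥ M *ᵥ w) (u : Fin d → ℝ) : normM M u = ‖T u‖ := by
  rw [normM, ← hT, real_inner_self_eq_norm_sq, Real.sqrt_sq (norm_nonneg _)]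

theorem norm_sub_smul_lt_norm {E : Type*} [NormedAddCommGroup E] [InnerProductSpace ℝ E]
    {v w : E} {t : ℝ} (ht : 0 < t) (h : t * ‖v‖ ^ 2 < 2 * inner ℝ v w) :
    ‖w - t • v‖ < ‖w‖ := by
  refine (pow_lt_pow_iff_left₀ (norm_nonneg _) (norm_nonneg _) two_ne_zero).mp ?_
  rw [norm_sub_sq_real, inner_smul_right, norm_smul, Real.norm_of_nonneg ht.le, real_inner_comm]
  nlinarith

section HopfLaxCost

variable {ι E : Type*} [Fintype ι] [NormedAddCommGroup E] [InnerProductSpace ℝ E]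
  (e : ι → E) (δ : ι → ℝ)

def hopfLaxCost (α : ι → ℝ) : ℝ := ‖Fintype.linearCombination ℝ e α‖ + α ⬝ᵥ δ

theorem continuous_hopfLaxCost : Continuous (hopfLaxCost e δ) := by
  unfold hopfLaxCost
  simp only [Fintype.linearCombination_apply, dotProduct]
  fun_prop

theorem hopfLaxCost_smul {c : ℝ} (hc : 0 ≤ c) (α : ι → ℝ) :
    hopfLaxCost e δ (c • α) = c * hopfLaxCost e δ α := by
  simp only [hopfLaxCost, map_smul, norm_smul, Real.norm_of_nonneg hc, smul_dotProduct,
    smul_eq_mul, mul_add]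

theorem hopfLaxCost_add (α β : ι → ℝ) :
    hopfLaxCost e δ (α + β) = ‖Fintype.linearCombination ℝ e α + Fintype.linearCombination ℝ e β‖
      + α ⬝ᵥ δ + β ⬝ᵥ δ := by
  rw [hopfLaxCost, map_add, add_dotProduct, add_assoc]

theorem exists_isMinOn_hopfLaxCost [Nonempty ι] :
    ∃ α ∈ stdSimplex ℝ ι, IsMinOn (hopfLaxCost e δ) (stdSimplex ℝ ι) α :=
  (isCompact_stdSimplex ℝ ι).exists_isMinOn ⟨_, single_mem_stdSimplex ℝ (Classical.arbitrary ι)⟩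
    (continuous_hopfLaxCost e δ).continuousOn

variable {e}

theorem linearCombination_ne_zero_of_mem_stdSimplex (he : LinearIndependent ℝ e) {α : ι → ℝ}
    (hα : α ∈ stdSimplex ℝ ι) : Fintype.linearCombination ℝ e α ≠ 0 := by
  intro h
  have : α = 0 := he.fintypeLinearCombination_injective (h.trans (map_zero _).symm)
  simpa [this] using hα.2

theorem eq_of_sameRay_of_mem_stdSimplex (he : LinearIndependent ℝ e) {α β : ι → ℝ}
    (hα : α ∈ stdSimplex ℝ ι) (hβ : β ∈ stdSimplex ℝ ι)
    (h : SameRay ℝ (Fintype.linearCombination ℝ e α) (Fintype.linearCombination ℝ e β)) :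
    α = β := by
  obtain ⟨r₁, r₂, -, hr₂, hr⟩ := h.exists_pos (linearCombination_ne_zero_of_mem_stdSimplex he hα)
    (linearCombination_ne_zero_of_mem_stdSimplex he hβ)
  rw [← map_smul, ← map_smul] at hr
  have hcoef : r₁ • α = r₂ • β := he.fintypeLinearCombination_injective hr
  have hr' : r₁ = r₂ := by
    simpa [← Finset.mul_sum, hα.2, hβ.2] using congrArg (fun γ => ∑ i, γ i) hcoef
  rw [hr'] at hcoef
  exact smul_right_injective _ hr₂.ne' hcoef

theorem eq_of_isMinOn_hopfLaxCost (he : LinearIndependent ℝ e) {α β : ι → ℝ}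
    (hα : α ∈ stdSimplex ℝ ι) (hβ : β ∈ stdSimplex ℝ ι)
    (hmα : IsMinOn (hopfLaxCost e δ) (stdSimplex ℝ ι) α)
    (hmβ : IsMinOn (hopfLaxCost e δ) (stdSimplex ℝ ι) β) : α = β := by
  refine eq_of_sameRay_of_mem_stdSimplex he hα hβ (sameRay_iff_norm_add.mpr ?_)
  have hmid : (2⁻¹ : ℝ) • (α + β) ∈ stdSimplex ℝ ι := by
    simpa only [smul_add] using convex_stdSimplex ℝ ι hα hβ (by norm_num) (by norm_num)
      (by norm_num : (2⁻¹ : ℝ) + 2⁻¹ = 1)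
  have hαmid := isMinOn_iff.mp hmα _ hmid
  have hαβ := isMinOn_iff.mp hmα _ hβ
  have hβα := isMinOn_iff.mp hmβ _ hα
  rw [hopfLaxCost_smul _ _ (by norm_num), hopfLaxCost_add] at hαmid
  simp only [hopfLaxCost] at hαmid hαβ hβα
  exact le_antisymm (norm_add_le _ _) (by linarith)

theorem lt_hopfLaxCost_of_isMinOn {α : ι → ℝ} (hα : α ∈ stdSimplex ℝ ι)
    (hmin : IsMinOn (hopfLaxCost e δ) (stdSimplex ℝ ι) α) {i : ι} (hi : 0 < α i) (he : e i ≠ 0)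
    (hacute : ∀ j, 0 ≤ inner ℝ (e i) (e j)) : δ i < hopfLaxCost e δ α := by
  set w := Fintype.linearCombination ℝ e α with hw
  have hq : 0 < ‖e i‖ ^ 2 := by positivity
  have hs : α i * ‖e i‖ ^ 2 ≤ inner ℝ (e i) w := by
    rw [hw, Fintype.linearCombination_apply, inner_sum, ← real_inner_self_eq_norm_sq]
    simp only [inner_smul_right]
    exact Finset.single_le_sum (fun j _ => mul_nonneg (hα.1 j) (hacute j)) (Finset.mem_univ i)
  have hαi : α i ≤ 1 := hα.2 ▸ Finset.single_le_sum (fun j _ => hα.1 j) (Finset.mem_univ i)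
  obtain ⟨t, ht, htα⟩ := exists_between hi
  have ht1 : 0 < 1 - t := sub_pos.mpr (htα.trans_le hαi)
  have hnorm : ‖w - t • e i‖ < ‖w‖ := norm_sub_smul_lt_norm ht (by nlinarith)
  set β := (1 - t)⁻¹ • (α - t • Pi.single i 1)
  have hβ : β ∈ stdSimplex ℝ ι := by
    refine ⟨fun j => mul_nonneg (inv_nonneg.mpr ht1.le) (sub_nonneg.mpr ?_), ?_⟩
    · rcases eq_or_ne j i with rfl | hj
      · simpa using htα.le
      · simpa [hj] using hα.1 j
    · simp [β, ← Finset.mul_sum, Finset.sum_sub_distrib, hα.2, ht1.ne']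
  have hβcost : (1 - t) * hopfLaxCost e δ β = ‖w - t • e i‖ + α ⬝ᵥ δ - t * δ i := by
    rw [hopfLaxCost_smul _ _ (inv_nonneg.mpr ht1.le), ← mul_assoc, mul_inv_cancel₀ ht1.ne',
      one_mul, hopfLaxCost, map_sub, map_smul, Fintype.linearCombination_apply_single, one_smul,
      sub_dotProduct, smul_dotProduct, single_one_dotProduct, smul_eq_mul]
    ring
  have hle := mul_le_mul_of_nonneg_left (isMinOn_iff.mp hmin _ hβ) ht1.le
  rw [hβcost] at hle
  simp only [hopfLaxCost] at hle ⊢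
  nlinarith

end HopfLaxCost

/-- Lemma `lem:Sethian`, first part (causality): the Hopf–Lax minimization over the
simplex `Ξ` has a unique minimizer, and if the minimizer has positive coefficients then
the minimal value `δ` satisfies `δ > δ_i` for every `i`. -/
theorem stmt10 {d k : ℕ} (hk : 1 ≤ k)
    (M : Matrix (Fin d) (Fin d) ℝ) (hM : M.PosDef)
    (v : Fin k → Fin d → ℝ) (hind : LinearIndependent ℝ v)
    (hacute : ∀ i j : Fin k, 0 ≤ v i ⬝ᵥ M.mulVec (v j))
    (δ : Fin k → ℝ) :
    (∃! α : Fin k → ℝ, ((∀ i, 0 ≤ α i) ∧ ∑ i, α i = 1) ∧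
      ∀ β : Fin k → ℝ, ((∀ i, 0 ≤ β i) ∧ ∑ i, β i = 1) →
        normM M (∑ i, α i • v i) + ∑ i, α i * δ i
          ≤ normM M (∑ i, β i • v i) + ∑ i, β i * δ i) ∧
    (∀ α : Fin k → ℝ, ((∀ i, 0 ≤ α i) ∧ ∑ i, α i = 1) →
      (∀ β : Fin k → ℝ, ((∀ i, 0 ≤ β i) ∧ ∑ i, β i = 1) →
        normM M (∑ i, α i • v i) + ∑ i, α i * δ i
          ≤ normM M (∑ i, β i • v i) + ∑ i, β i * δ i) →
      (∀ i, 0 < α i) →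
      ∀ i, δ i < normM M (∑ j, α j • v j) + ∑ j, α j * δ j) := by
  obtain ⟨T, hTinj, hT⟩ := hM.exists_injective_linearMap_inner_eq
  have he : LinearIndependent ℝ (T ∘ v) := hind.map' T (LinearMap.ker_eq_bot.mpr hTinj)
  have hcost : ∀ α : Fin k → ℝ,
      normM M (∑ i, α i • v i) + ∑ i, α i * δ i = hopfLaxCost (T ∘ v) δ α := fun α => by
    simp [hopfLaxCost, normM_eq_norm hT, Fintype.linearCombination_apply, dotProduct]
  simp only [hcost]
  have : Nonempty (Fin k) := ⟨⟨0, hk⟩⟩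
  obtain ⟨α, hα, hmin⟩ := exists_isMinOn_hopfLaxCost (T ∘ v) δ
  refine ⟨⟨α, ⟨hα, isMinOn_iff.mp hmin⟩, fun β ⟨hβ, hβmin⟩ =>
      eq_of_isMinOn_hopfLaxCost δ he hβ hα (isMinOn_iff.mpr hβmin) hmin⟩,
    fun α hα hmin hpos i => lt_hopfLaxCost_of_isMinOn δ hα (isMinOn_iff.mpr hmin) (hpos i)
      (he.ne_zero i) ?_⟩
  intro j
  simpa [hT] using hacute i j

end
end

section
/- Let M ∈ S_d^+ and let v_1,…,v_k ∈ ℝ^d be linearly independent vectors such that v_iᵀ M v_j ≥ 0 for all 1 ≤ i ≤ j ≤ k. Let Ξ := {α ∈ ℝ_+^k : α_1 + ⋯ + α_k = 1}, let Δ = (δ_1,…,δ_k) ∈ ℝ^k, let δ := min_{α ∈ Ξ} (‖Σ_i α_i v_i‖_M + Σ_i α_i δ_i), and suppose the (unique) minimizer α ∈ Ξ has all coefficients positive. Let M̂ be the k×k Gram matrix with entries M̂_{ij} = v_iᵀ M v_j and let 𝟙 := (1,…,1) ∈ ℝ^k. Then ‖δ𝟙 − Δ‖_{M̂⁻¹}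 = 1 and M̂ α = ‖α‖_{M̂} · (δ𝟙 − Δ), where ‖x‖_{M̂} := √(xᵀ M̂ x) and ‖x‖_{M̂⁻¹} := √(xᵀ M̂⁻¹ x). -/
open Matrix
open scoped BigOperators ENNReal Classical

noncomputable section

/-!
Via the Gram matrix `M̂`, `‖∑ βᵢ vᵢ‖_M = ‖β‖_{M̂}`, so `α` minimizes
`f β = ‖β‖_{M̂} + β ⬝ Δ` over the standard simplex. As `α` is interior, moving a little mass
`t` from `eᵢ` to `eⱼ` does not decrease `f`; bounding the square root by its tangent line and
letting `t → 0⁺` shows that the gradient `g = M̂α / ‖α‖_{M̂} + Δ` has equal coordinates.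
Averaging `g` against `α` identifies the common value as `‖α‖_{M̂} + α ⬝ Δ = δ`, hence
`M̂α = ‖α‖_{M̂} (δ𝟙 - Δ)`, and then `(δ𝟙 - Δ)ᵀ M̂⁻¹ (δ𝟙 - Δ) = αᵀ M̂ α / ‖α‖²_{M̂} = 1`.
-/

open Set Filter Topology

lemma Real.sqrt_le_tangent {x a : ℝ} (hx : 0 ≤ x) (ha : 0 < a) :
    √x ≤ a + (x - a ^ 2) / (2 * a) := by
  rw [← sub_le_iff_le_add', le_div_iff₀ (by positivity)]
  nlinarith [Real.sq_sqrt hx, sq_nonneg (√x - a)]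

lemma nonneg_of_forall_mem_Ioc_nonneg_add_mul {a b s : ℝ} (hs : 0 < s)
    (h : ∀ t ∈ Ioc 0 s, 0 ≤ a + t * b) : 0 ≤ a := by
  have hlim : Tendsto (fun t => a + t * b) (𝓝[>] 0) (𝓝 a) :=
    tendsto_nhdsWithin_of_tendsto_nhds (Continuous.tendsto' (by fun_prop) 0 a (by simp))
  exact ge_of_tendsto hlim (eventually_of_mem (Ioc_mem_nhdsGT hs) h)

lemma add_smul_single_sub_single_mem_stdSimplex {ι : Type*} [Fintype ι] [DecidableEq ι]
    {α : ι → ℝ} (hα : α ∈ stdSimplex ℝ ι) {i : ι} {t : ℝ} (ht₀ : 0 ≤ t) (ht : t ≤ α i)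
    (j : ι) : α + t • (Pi.single j 1 - Pi.single i 1) ∈ stdSimplex ℝ ι := by
  refine ⟨fun m => ?_, ?_⟩
  · have hi : t * (Pi.single i 1 : ι → ℝ) m ≤ α m := by
      rcases eq_or_ne m i with rfl | hmi
      · simpa using ht
      · simpa [hmi] using hα.1 m
    have hj : 0 ≤ t * (Pi.single j 1 : ι → ℝ) m :=
      mul_nonneg ht₀ ((Pi.single_nonneg.2 zero_le_one : (0 : ι → ℝ) ≤ Pi.single j 1) m)
    simp only [Pi.add_apply, Pi.smul_apply, Pi.sub_apply, smul_eq_mul, mul_sub]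
    linarith
  · simp [Finset.sum_add_distrib, ← Finset.mul_sum, Finset.sum_sub_distrib, hα.2]

namespace Matrix

lemma IsSymm.dotProduct_mulVec_comm {n R : Type*} [Fintype n] [CommSemiring R]
    {A : Matrix n n R} (hA : A.IsSymm) (x y : n → R) : x ⬝ᵥ A *ᵥ y = y ⬝ᵥ A *ᵥ x := by
  rw [dotProduct_mulVec, ← mulVec_transpose, hA.eq, dotProduct_comm]

lemma IsSymm.add_smul_dotProduct_mulVec_add_smul {n R : Type*} [Fintype n] [CommRing R]
    {A : Matrix n n R} (hA : A.IsSymm) (x h : n → R) (t : R) :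
    (x + t • h) ⬝ᵥ A *ᵥ (x + t • h)
      = x ⬝ᵥ A *ᵥ x + 2 * t * (h ⬝ᵥ A *ᵥ x) + t ^ 2 * (h ⬝ᵥ A *ᵥ h) := by
  simp only [mulVec_add, mulVec_smul, add_dotProduct, dotProduct_add, smul_dotProduct,
    dotProduct_smul, smul_eq_mul, hA.dotProduct_mulVec_comm x h]
  ring

lemma PosSemidef.isSymm {n : Type*} {A : Matrix n n ℝ} (hA : A.PosSemidef) : A.IsSymm := by
  simpa [IsSymm, IsHermitian, conjTranspose_eq_transpose_of_trivial] using hA.1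

end Matrix

section Simplex

variable {k : ℕ} {A : Matrix (Fin k) (Fin k) ℝ} {Δ α : Fin k → ℝ}

lemma sq_normM (hA : A.PosSemidef) (x : Fin k → ℝ) : normM A x ^ 2 = x ⬝ᵥ A *ᵥ x :=
  Real.sq_sqrt (by simpa using hA.dotProduct_mulVec_nonneg x)

lemma normM_add_smul_le (hA : A.PosSemidef) {x : Fin k → ℝ} (hx : 0 < normM A x)
    (h : Fin k → ℝ) (t : ℝ) :
    normM A (x + t • h)
      ≤ normM A x + (t * (h ⬝ᵥ A *ᵥ x) + t ^ 2 / 2 * (h ⬝ᵥ A *ᵥ h)) / normM A x := by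
  have hnonneg : 0 ≤ (x + t • h) ⬝ᵥ A *ᵥ (x + t • h) := by
    simpa using hA.dotProduct_mulVec_nonneg (x + t • h)
  refine (Real.sqrt_le_tangent hnonneg hx).trans_eq ?_
  rw [hA.isSymm.add_smul_dotProduct_mulVec_add_smul, ← sq_normM hA]
  field_simp
  ring

lemma mulVec_div_normM_add_le_of_isMinOn_stdSimplex (hA : A.PosSemidef)
    (hα : α ∈ stdSimplex ℝ (Fin k))
    (hmin : IsMinOn (fun β => normM A β + β ⬝ᵥ Δ) (stdSimplex ℝ (Fin k)) α)
    (hnorm : 0 < normM A α) {i : Fin k} (hi : 0 < α i) (j : Fin k) :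
    (A *ᵥ α) i / normM A α + Δ i ≤ (A *ᵥ α) j / normM A α + Δ j := by
  set a := normM A α
  set h : Fin k → ℝ := Pi.single j 1 - Pi.single i 1
  have hq : h ⬝ᵥ A *ᵥ α = (A *ᵥ α) j - (A *ᵥ α) i := by
    simp [h, sub_dotProduct, single_dotProduct]
  have hΔ : h ⬝ᵥ Δ = Δ j - Δ i := by simp [h, sub_dotProduct, single_dotProduct]
  suffices 0 ≤ (h ⬝ᵥ A *ᵥ α) / a + h ⬝ᵥ Δ by
    rw [hq, hΔ, sub_div] at this
    linarith
  refine nonneg_of_forall_mem_Ioc_nonneg_add_mul hi (b := (h ⬝ᵥ A *ᵥ h) / (2 * a)) ?_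
  rintro t ⟨ht₀, ht⟩
  have hle := isMinOn_iff.mp hmin _ (add_smul_single_sub_single_mem_stdSimplex hα ht₀.le ht j)
  have hbound := normM_add_smul_le hA hnorm h t
  simp only [add_dotProduct, smul_dotProduct, smul_eq_mul] at hle
  have key : 0 ≤ t * ((h ⬝ᵥ A *ᵥ α) / a + h ⬝ᵥ Δ + t * ((h ⬝ᵥ A *ᵥ h) / (2 * a))) := by
    have hexpand : t * ((h ⬝ᵥ A *ᵥ α) / a + h ⬝ᵥ Δ + t * ((h ⬝ᵥ A *ᵥ h) / (2 * a)))
        = (t * (h ⬝ᵥ A *ᵥ α) + t ^ 2 / 2 * (h ⬝ᵥ A *ᵥ h)) / a + t * (h ⬝ᵥ Δ) := by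
      field_simp
      ring
    linarith
  exact nonneg_of_mul_nonneg_right key ht₀

lemma normM_pos_of_mem_stdSimplex (hA : A.PosDef) (hα : α ∈ stdSimplex ℝ (Fin k)) :
    0 < normM A α := by
  have hα₀ : α ≠ 0 := by
    rintro rfl
    simpa using hα.2
  exact Real.sqrt_pos.2 (by simpa using hA.dotProduct_mulVec_pos hα₀)

lemma mulVec_eq_normM_smul_of_isMinOn_stdSimplex (hA : A.PosDef)
    (hα : α ∈ stdSimplex ℝ (Fin k))
    (hmin : IsMinOn (fun β => normM A β + β ⬝ᵥ Δ) (stdSimplex ℝ (Fin k)) α)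
    (hpos : ∀ i, 0 < α i) :
    A *ᵥ α = normM A α • fun i => normM A α + α ⬝ᵥ Δ - Δ i := by
  set a := normM A α
  have ha : 0 < a := normM_pos_of_mem_stdSimplex hA hα
  set g : Fin k → ℝ := fun m => (A *ᵥ α) m / a + Δ m
  have hg : ∀ i j, g i = g j := fun i j =>
    (mulVec_div_normM_add_le_of_isMinOn_stdSimplex hA.posSemidef hα hmin ha (hpos i) j).antisymm
      (mulVec_div_normM_add_le_of_isMinOn_stdSimplex hA.posSemidef hα hmin ha (hpos j) i)
  have hsq : a ^ 2 = α ⬝ᵥ A *ᵥ α := sq_normM hA.posSemidef α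
  have hmean : ∀ i, g i = a + α ⬝ᵥ Δ := fun i => calc
    g i = ∑ m, α m * g m := by simp_rw [hg _ i, ← Finset.sum_mul, hα.2, one_mul]
    _ = (α ⬝ᵥ A *ᵥ α) / a + α ⬝ᵥ Δ := by
      simp only [g, mul_add, Finset.sum_add_distrib, dotProduct, Finset.sum_div, mul_div_assoc]
    _ = a + α ⬝ᵥ Δ := by rw [← hsq]; field_simp
  funext i
  rw [Pi.smul_apply, smul_eq_mul, ← hmean i, add_sub_cancel_right]
  field_simp

end Simplex

lemma normM_inv_eq_one_of_mulVec_eq_normM_smul {k : ℕ} {A : Matrix (Fin k) (Fin k) ℝ}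
    (hA : IsUnit A.det) {α y : Fin k → ℝ} (hα : 0 < normM A α)
    (h : A *ᵥ α = normM A α • y) : normM A⁻¹ y = 1 := by
  have hsq : normM A α ^ 2 = α ⬝ᵥ A *ᵥ α := Real.sq_sqrt (Real.sqrt_pos.1 hα).le
  have hy : y = (normM A α)⁻¹ • A *ᵥ α := by rw [h, inv_smul_smul₀ hα.ne']
  rw [normM, hy, mulVec_smul, mulVec_mulVec, nonsing_inv_mul _ hA, one_mulVec, smul_dotProduct,
    dotProduct_smul, dotProduct_comm, ← hsq]
  simp [field]

section Gram

variable {m n : Type*} [Fintype n]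

lemma of_dotProduct_mulVec_eq_mul_mul_transpose {R : Type*} [CommSemiring R]
    (M : Matrix n n R) (v : m → n → R) :
    (of fun i j => v i ⬝ᵥ M *ᵥ v j) = of v * M * (of v)ᵀ := by
  ext i j
  simp only [of_apply, dotProduct, mulVec, mul_apply, transpose_apply, Finset.mul_sum,
    Finset.sum_mul, mul_assoc]
  exact Finset.sum_comm

lemma posDef_mul_mul_transpose_of_linearIndependent [Fintype m] {M : Matrix n n ℝ}
    (hM : M.PosDef) {v : m → n → ℝ} (hv : LinearIndependent ℝ v) :
    (of v * M * (of v)ᵀ).PosDef := by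
  simpa [conjTranspose_eq_transpose_of_trivial] using
    hM.mul_mul_conjTranspose_same (B := of v) (vecMul_injective_iff.2 hv)

lemma normM_sum_smul {d k : ℕ} (M : Matrix (Fin d) (Fin d) ℝ) (v : Fin k → Fin d → ℝ)
    (β : Fin k → ℝ) : normM M (∑ i, β i • v i) = normM (of v * M * (of v)ᵀ) β := by
  rw [normM, normM, show ∑ i, β i • v i = β ᵥ* of v from (vecMul_eq_sum β (of v)).symm,
    ← mulVec_mulVec, ← mulVec_mulVec, dotProduct_mulVec β, mulVec_transpose]

end Gram

theorem stmt11_general {d k : ℕ}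
    (M : Matrix (Fin d) (Fin d) ℝ) (hM : M.PosDef)
    (v : Fin k → Fin d → ℝ) (hind : LinearIndependent ℝ v)
    (Δ : Fin k → ℝ) (α : Fin k → ℝ)
    (hα : (∀ i, 0 ≤ α i) ∧ ∑ i, α i = 1)
    (hmin : ∀ β : Fin k → ℝ, ((∀ i, 0 ≤ β i) ∧ ∑ i, β i = 1) →
      normM M (∑ i, α i • v i) + ∑ i, α i * Δ i
        ≤ normM M (∑ i, β i • v i) + ∑ i, β i * Δ i)
    (hpos : ∀ i, 0 < α i)
    (Mhat : Matrix (Fin k) (Fin k) ℝ)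
    (hMhat : Mhat = Matrix.of fun i j => v i ⬝ᵥ M.mulVec (v j))
    (δ : ℝ) (hδ : δ = normM M (∑ i, α i • v i) + ∑ i, α i * Δ i) :
    normM Mhat⁻¹ (fun i => δ - Δ i) = 1 ∧
    Mhat.mulVec α = normM Mhat α • (fun i => δ - Δ i) := by
  obtain rfl : Mhat = of v * M * (of v)ᵀ :=
    hMhat.trans (of_dotProduct_mulVec_eq_mul_mul_transpose M v)
  have hA := posDef_mul_mul_transpose_of_linearIndependent hM hind
  have hmin' : IsMinOn (fun β => normM (of v * M * (of v)ᵀ) β + β ⬝ᵥ Δ)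
      (stdSimplex ℝ (Fin k)) α :=
    isMinOn_iff.2 fun β hβ => by simpa only [normM_sum_smul, dotProduct] using hmin β hβ
  have hδ' : δ = normM (of v * M * (of v)ᵀ) α + α ⬝ᵥ Δ := by rw [hδ, normM_sum_smul]; rfl
  have hgrad := mulVec_eq_normM_smul_of_isMinOn_stdSimplex hA hα hmin' hpos
  rw [← hδ'] at hgrad
  exact ⟨normM_inv_eq_one_of_mulVec_eq_normM_smul hA.det_pos.ne'.isUnit
    (normM_pos_of_mem_stdSimplex hA hα) hgrad, hgrad⟩

/-- Lemma `lem:Sethian`, second part: the optimality relations satisfied by the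
minimizer, in terms of the Gram matrix `M̂`. -/
theorem stmt11 {d k : ℕ} (hk : 1 ≤ k)
    (M : Matrix (Fin d) (Fin d) ℝ) (hM : M.PosDef)
    (v : Fin k → Fin d → ℝ) (hind : LinearIndependent ℝ v)
    (hacute : ∀ i j : Fin k, 0 ≤ v i ⬝ᵥ M.mulVec (v j))
    (Δ : Fin k → ℝ) (α : Fin k → ℝ)
    (hα : (∀ i, 0 ≤ α i) ∧ ∑ i, α i = 1)
    (hmin : ∀ β : Fin k → ℝ, ((∀ i, 0 ≤ β i) ∧ ∑ i, β i = 1) →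
      normM M (∑ i, α i • v i) + ∑ i, α i * Δ i
        ≤ normM M (∑ i, β i • v i) + ∑ i, β i * Δ i)
    (hpos : ∀ i, 0 < α i)
    (Mhat : Matrix (Fin k) (Fin k) ℝ)
    (hMhat : Mhat = Matrix.of fun i j => v i ⬝ᵥ M.mulVec (v j))
    (δ : ℝ) (hδ : δ = normM M (∑ i, α i • v i) + ∑ i, α i * Δ i) :
    normM Mhat⁻¹ (fun i => δ - Δ i) = 1 ∧
    Mhat.mulVec α = normM Mhat α • (fun i => δ - Δ i) :=
  stmt11_general M hM v hind Δ α hα hmin hpos Mhat hMhat δ hδ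

end
end
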